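/- arXiv:2404.06476 — 6 statements merged into one kernel-verified Lean document; each statement's English description precedes it below -/
import Mathlib

section
/- Let T be a mixing automorphism of a probability space whose homoclinic group H(T) = {S : T^{-n}ST^n → Id in the weak topology as n → ∞} contains an ergodic automorphism. Then T is mixing of multiplicity 2: for all measurable sets A,B,C, μ(A ∩ T^m B ∩ T^{m+n}C) → μ(A)μ(B)μ(C) as m,n → +∞. -/
open MeasureTheory Filter
open scoped symmDiff


open Function
open scoped ENNReal RealInnerProductSpace

section Aux
variable {X : Type*} [MeasurableSpace X]


variable {X : Type*} [MeasurableSpace X]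

-- basic set lemmas
example (a b c : Set X) : (a ∩ b) ∆ (a ∩ c) ⊆ b ∆ c := by
  intro x hx; simp [Set.mem_symmDiff] at *; tauto

example (d b e c : Set X) : (d ∩ b ∩ e) ∆ (d ∩ c ∩ e) ⊆ b ∆ c := by
  intro x hx; simp [Set.mem_symmDiff] at *; tauto

lemma aux_abs (μ : Measure X) [IsFiniteMeasure μ] (s t : Set X) :
    |(μ s).toReal - (μ t).toReal| ≤ (μ (s ∆ t)).toReal := by
  have key : ∀ u v : Set X, (μ u).toReal ≤ (μ v).toReal + (μ (u ∆ v)).toReal := by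
    intro u v
    have h1 : μ u ≤ μ v + μ (u ∆ v) := by
      refine le_trans (measure_mono ?_) (measure_union_le _ _)
      intro x hx
      by_cases h : x ∈ v
      · exact Or.inl h
      · exact Or.inr (by simp [Set.mem_symmDiff, hx, h])
    have := ENNReal.toReal_mono (by finiteness) h1
    rwa [ENNReal.toReal_add (measure_ne_top _ _) (measure_ne_top _ _)] at this
  rw [abs_sub_le_iff]
  constructor
  · linarith [key s t]
  · have := key t s
    rw [symmDiff_comm] at this
    linarith

lemma image_iterate_eq_preimage (e : X ≃ᵐ X) (m : ℕ) (Y : Set X) :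
    (⇑e)^[m] '' Y = (⇑e.symm)^[m] ⁻¹' Y := by
  exact congrFun (Set.image_eq_preimage_of_inverse
    (Function.LeftInverse.iterate e.symm_apply_apply m)
    (Function.LeftInverse.iterate e.apply_symm_apply m)) Y

lemma meas_image (e : X ≃ᵐ X) (m : ℕ) {Y : Set X} (hY : MeasurableSet Y) :
    MeasurableSet ((⇑e)^[m] '' Y) := by
  rw [image_iterate_eq_preimage]
  exact (e.symm.measurable.iterate m) hY

lemma measure_image_iterate {μ : Measure X} (e : X ≃ᵐ X) (h : MeasurePreserving e μ μ)
    (m : ℕ) {Y : Set X} (hY : MeasurableSet Y) : μ ((⇑e)^[m] '' Y) = μ Y := by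
  rw [image_iterate_eq_preimage]
  exact ((h.symm e).iterate m).measure_preimage hY.nullMeasurableSet

lemma eps_pow {μ : Measure X} (S : X ≃ᵐ X) (hS : MeasurePreserving S μ μ)
    (k : ℕ) {Y : Set X} (hY : MeasurableSet Y) :
    μ (((⇑S)^[k] ⁻¹' Y) ∆ Y) ≤ (k : ℝ≥0∞) * μ ((⇑S ⁻¹' Y) ∆ Y) := by
  induction k with
  | zero => simp
  | succ k ih =>
    have hstep : (⇑S)^[k+1] ⁻¹' Y = ⇑S ⁻¹' ((⇑S)^[k] ⁻¹' Y) := by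
      rw [Function.iterate_succ, Set.preimage_comp]
    calc μ (((⇑S)^[k+1] ⁻¹' Y) ∆ Y)
        ≤ μ (((⇑S)^[k+1] ⁻¹' Y) ∆ (⇑S ⁻¹' Y)) + μ ((⇑S ⁻¹' Y) ∆ Y) :=
          measure_symmDiff_le _ _ _
      _ = μ (((⇑S)^[k] ⁻¹' Y) ∆ Y) + μ ((⇑S ⁻¹' Y) ∆ Y) := by
          rw [hstep, ← Set.preimage_symmDiff]
          congr 1
          exact hS.measure_preimage
            (((S.measurable.iterate k) hY).symmDiff hY).nullMeasurableSet
      _ ≤ (k : ℝ≥0∞) * μ ((⇑S ⁻¹' Y) ∆ Y) + 1 * μ ((⇑S ⁻¹' Y) ∆ Y) := by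
          rw [one_mul]; exact add_le_add_left ih _
      _ = ((k+1 : ℕ) : ℝ≥0∞) * μ ((⇑S ⁻¹' Y) ∆ Y) := by
          push_cast; ring

lemma heps {μ : Measure X} (T S : X ≃ᵐ X) (hT : MeasurePreserving T μ μ)
    (hS : MeasurePreserving S μ μ)
    (hhom : ∀ B : Set X, MeasurableSet B →
      Tendsto (fun n : ℕ => μ (((⇑T.symm)^[n] '' (S '' ((⇑T)^[n] '' B))) ∆ B))
        atTop (nhds 0))
    {Y : Set X} (hY : MeasurableSet Y) :
    Tendsto (fun m : ℕ => μ ((⇑S ⁻¹' ((⇑T)^[m] '' Y)) ∆ ((⇑T)^[m] '' Y))) atTop (nhds 0) := by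
  have key : ∀ m : ℕ, μ ((⇑S ⁻¹' ((⇑T)^[m] '' Y)) ∆ ((⇑T)^[m] '' Y))
      = μ (((⇑T.symm)^[m] '' (S '' ((⇑T)^[m] '' Y))) ∆ Y) := by
    intro m
    set W := (⇑T)^[m] '' Y with hW
    have hWm : MeasurableSet W := meas_image T m hY
    have hSWm : MeasurableSet (⇑S '' W) := by
      have := meas_image S 1 hWm; simpa using this
    have h1 : (⇑S ⁻¹' W) ∆ W = ⇑S ⁻¹' (W ∆ (⇑S '' W)) := by
      rw [Set.preimage_symmDiff, Set.preimage_image_eq W S.injective]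
    have h2 : μ ((⇑S ⁻¹' W) ∆ W) = μ (W ∆ (⇑S '' W)) := by
      rw [h1]
      exact hS.measure_preimage (hWm.symmDiff hSWm).nullMeasurableSet
    have h3 : μ (W ∆ (⇑S '' W)) = μ ((⇑T)^[m] ⁻¹' (W ∆ (⇑S '' W))) := by
      exact ((hT.iterate m).measure_preimage (hWm.symmDiff hSWm).nullMeasurableSet).symm
    have h4 : (⇑T)^[m] ⁻¹' (W ∆ (⇑S '' W)) = Y ∆ ((⇑T.symm)^[m] '' (S '' W)) := by
      rw [Set.preimage_symmDiff, hW, Set.preimage_image_eq Y (T.injective.iterate m),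
        image_iterate_eq_preimage T.symm m, MeasurableEquiv.symm_symm]
    rw [h2, h3, h4, symmDiff_comm]
  rw [show (fun m : ℕ => μ ((⇑S ⁻¹' ((⇑T)^[m] '' Y)) ∆ ((⇑T)^[m] '' Y)))
      = (fun m : ℕ => μ (((⇑T.symm)^[m] '' (S '' ((⇑T)^[m] '' Y))) ∆ Y)) from funext key]
  exact hhom Y hY

section Koopman

variable {μ : Measure X} [IsProbabilityMeasure μ]

noncomputable def koop (μ : Measure X) (S : X ≃ᵐ X) (hS : MeasurePreserving S μ μ) :
    Lp ℝ 2 μ →L[ℝ] Lp ℝ 2 μ :=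
  (Lp.compMeasurePreservingₗᵢ ℝ ⇑S hS).toContinuousLinearMap

lemma koop_norm_le (S : X ≃ᵐ X) (hS : MeasurePreserving S μ μ) : ‖koop μ S hS‖ ≤ 1 :=
  LinearIsometry.norm_toContinuousLinearMap_le _

lemma koop_coeFn (S : X ≃ᵐ X) (hS : MeasurePreserving S μ μ) (f : Lp ℝ 2 μ) :
    ⇑(koop μ S hS f) =ᵐ[μ] ⇑f ∘ ⇑S :=
  Lp.coeFn_compMeasurePreserving f hS

lemma inner_indic {D F : Set X} (hD : MeasurableSet D) (hF : MeasurableSet F) :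
    ⟪(indicatorConstLp 2 hD (measure_ne_top μ D) (1:ℝ)),
      (indicatorConstLp 2 hF (measure_ne_top μ F) (1:ℝ))⟫ = (μ (D ∩ F)).toReal := by
  rw [MeasureTheory.L2.inner_def,
    integral_congr_ae (g := (D ∩ F).indicator (1 : X → ℝ)) ?_, integral_indicator_one (hD.inter hF), measureReal_def]
  filter_upwards [indicatorConstLp_coeFn (μ := μ) (p := 2) (hs := hD) (hμs := measure_ne_top μ D) (c := (1:ℝ)),
    indicatorConstLp_coeFn (μ := μ) (p := 2) (hs := hF) (hμs := measure_ne_top μ F) (c := (1:ℝ))] with a h1 h2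
  rw [h1, h2]
  simp only [RCLike.inner_apply, conj_trivial]
  by_cases ha : a ∈ D <;> by_cases hb : a ∈ F <;>
    simp [Set.indicator_apply, ha, hb]

lemma koop_iter_coeFn (S : X ≃ᵐ X) (hS : MeasurePreserving S μ μ)
    {A : Set X} (hA : MeasurableSet A) (k : ℕ) :
    ⇑((⇑(koop μ S hS))^[k] (indicatorConstLp 2 hA (measure_ne_top μ A) (1:ℝ)))
      =ᵐ[μ] (A.indicator (1 : X → ℝ)) ∘ (⇑S)^[k] := by
  induction k with
  | zero =>
    exact indicatorConstLp_coeFn (μ := μ) (p := 2) (hs := hA)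
      (hμs := measure_ne_top μ A) (c := (1:ℝ))
  | succ k ih =>
    rw [Function.iterate_succ_apply']
    refine (koop_coeFn S hS _).trans ?_
    have h2 := hS.quasiMeasurePreserving.ae_eq_comp ih
    refine h2.trans ?_
    rw [Function.comp_assoc, ← Function.iterate_succ]

lemma inner_koop_iter (S : X ≃ᵐ X) (hS : MeasurePreserving S μ μ)
    {A F : Set X} (hA : MeasurableSet A) (hF : MeasurableSet F) (k : ℕ) :
    ⟪(⇑(koop μ S hS))^[k] (indicatorConstLp 2 hA (measure_ne_top μ A) (1:ℝ)),
      (indicatorConstLp 2 hF (measure_ne_top μ F) (1:ℝ))⟫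
      = (μ ((⇑S)^[k] ⁻¹' A ∩ F)).toReal := by
  rw [MeasureTheory.L2.inner_def,
    integral_congr_ae (g := ((⇑S)^[k] ⁻¹' A ∩ F).indicator (1 : X → ℝ)) ?_,
    integral_indicator_one (((S.measurable.iterate k) hA).inter hF), measureReal_def]
  filter_upwards [koop_iter_coeFn S hS hA k,
    indicatorConstLp_coeFn (μ := μ) (p := 2) (hs := hF) (hμs := measure_ne_top μ F) (c := (1:ℝ))] with a h1 h2
  rw [h1, h2]
  simp only [RCLike.inner_apply, conj_trivial, Function.comp_apply]
  by_cases ha : (⇑S)^[k] a ∈ A <;> by_cases hb : a ∈ F <;>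
    simp [Set.indicator_apply, ha, hb, Set.mem_preimage]

end Koopman

section MET

variable {μ : Measure X} [IsProbabilityMeasure μ]

set_option maxHeartbeats 1000000 in
set_option synthInstance.maxHeartbeats 1000000 in
lemma met (S : X ≃ᵐ X) (hS : MeasurePreserving S μ μ) (hSerg : Ergodic (⇑S) μ)
    {A : Set X} (hA : MeasurableSet A) :
    Tendsto (fun K => birkhoffAverage ℝ (⇑(koop μ S hS)) _root_.id K
        (indicatorConstLp 2 hA (measure_ne_top μ A) (1:ℝ))) atTop
      (nhds ((μ A).toReal •
        (indicatorConstLp 2 MeasurableSet.univ (measure_ne_top μ Set.univ) (1:ℝ)))) := by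
  set κ := koop μ S hS with hκ
  set xA : Lp ℝ 2 μ := indicatorConstLp 2 hA (measure_ne_top μ A) (1:ℝ) with hxA
  set oneL : Lp ℝ 2 μ :=
    indicatorConstLp 2 MeasurableSet.univ (measure_ne_top μ Set.univ) (1:ℝ) with honeL
  have honeL_coe : ⇑oneL =ᵐ[μ] fun _ => (1:ℝ) := by
    refine (indicatorConstLp_coeFn).trans ?_
    simp [Set.indicator_univ]
  have hone_mem : oneL ∈ κ.eqLocus (1 : Lp ℝ 2 μ →L[ℝ] Lp ℝ 2 μ) := by
    rw [LinearMap.mem_eqLocus]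
    show κ oneL = oneL
    apply Lp.ext
    refine (koop_coeFn S hS oneL).trans ?_
    refine (hS.quasiMeasurePreserving.ae_eq_comp honeL_coe).trans honeL_coe.symm
  have herg : ∀ y : Lp ℝ 2 μ, κ y = y → ∃ r : ℝ, (y : Lp ℝ 2 μ) = r • oneL := by
    intro y hy
    have hae : ⇑y ∘ ⇑S =ᵐ[μ] ⇑y := by
      refine (koop_coeFn S hS y).symm.trans ?_
      rw [hy]
    obtain ⟨r, hr⟩ := hSerg.ae_eq_const_of_ae_eq_comp_ae (Lp.aestronglyMeasurable y) hae
    refine ⟨r, Lp.ext ?_⟩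
    refine hr.trans ?_
    refine (Filter.EventuallyEq.symm ?_)
    refine (Lp.coeFn_smul r oneL).trans ?_
    filter_upwards [honeL_coe] with a h
    simp [h, Function.const]
  have hmain := ContinuousLinearMap.tendsto_birkhoffAverage_orthogonalProjection (𝕜 := ℝ)
    κ (koop_norm_le S hS) xA
  set P := (κ.eqLocus (1 : Lp ℝ 2 μ →L[ℝ] Lp ℝ 2 μ)).orthogonalProjectionOnto xA with hP
  have hPfix : κ (P : Lp ℝ 2 μ) = (P : Lp ℝ 2 μ) := by
    have := P.2
    rw [LinearMap.mem_eqLocus] at this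
    simpa using this
  obtain ⟨r, hr⟩ := herg _ hPfix
  have horth : ⟪xA - (P : Lp ℝ 2 μ), oneL⟫ = 0 :=
    Submodule.starProjection_inner_eq_zero (𝕜 := ℝ) (K := κ.eqLocus (1 : Lp ℝ 2 μ →L[ℝ] Lp ℝ 2 μ)) xA oneL hone_mem
  rw [inner_sub_left, sub_eq_zero] at horth
  have h1 : ⟪xA, oneL⟫ = (μ A).toReal := by
    rw [hxA, honeL, inner_indic hA MeasurableSet.univ, Set.inter_univ]
  have h2 : ⟪(P : Lp ℝ 2 μ), oneL⟫ = r := by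
    rw [hr, real_inner_smul_left, honeL, inner_indic MeasurableSet.univ MeasurableSet.univ]
    simp
  have hPr : (P : Lp ℝ 2 μ) = (μ A).toReal • oneL := by
    rw [hr, ← h1, horth, h2]
  rw [hPr] at hmain
  exact hmain

end MET

lemma symmDiff_triple_subset (d b e c : Set X) : ((d ∩ b) ∩ e) ∆ ((d ∩ c) ∩ e) ⊆ b ∆ c := by
  intro x hx; simp [Set.mem_symmDiff] at *; tauto

lemma symmDiff_pair_subset (q b c : Set X) : (q ∩ b) ∆ (q ∩ c) ⊆ b ∆ c := by
  intro x hx; simp [Set.mem_symmDiff] at *; tauto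


end Aux

set_option maxHeartbeats 2000000
set_option synthInstance.maxHeartbeats 1000000
set_option linter.unusedSectionVars false

/-- If a mixing automorphism `T` has an ergodic automorphism in its homoclinic group
`H(T) = {S : T^{-n} S T^n → Id}`, then `T` is mixing of multiplicity 2. -/
theorem mixing_of_multiplicity_two_of_ergodic_homoclinic
    {X : Type*} [MeasurableSpace X] (μ : Measure X) [IsProbabilityMeasure μ]
    (T : X ≃ᵐ X) (hT : MeasurePreserving T μ μ)
    (hmix : ∀ A B : Set X, MeasurableSet A → MeasurableSet B →
      Tendsto (fun m : ℕ => μ (A ∩ (⇑T)^[m] '' B)) atTop (nhds (μ A * μ B)))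
    (S : X ≃ᵐ X) (hS : MeasurePreserving S μ μ) (hSerg : Ergodic (S : X → X) μ)
    (hhom : ∀ B : Set X, MeasurableSet B →
      Tendsto (fun n : ℕ => μ (((⇑T.symm)^[n] '' (S '' ((⇑T)^[n] '' B))) ∆ B))
        atTop (nhds 0)) :
    ∀ A B C : Set X, MeasurableSet A → MeasurableSet B → MeasurableSet C →
      Tendsto (fun p : ℕ × ℕ => μ (A ∩ (⇑T)^[p.1] '' B ∩ (⇑T)^[p.1 + p.2] '' C))
        atTop (nhds (μ A * μ B * μ C)) := by
  intro A B C hA hB hC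
  rw [← ENNReal.tendsto_toReal_iff (fun p => measure_ne_top μ _) (by finiteness)]
  set c : ℝ := (μ A).toReal with hc
  have hc0 : 0 ≤ c := ENNReal.toReal_nonneg
  have hc1 : c ≤ 1 := by
    rw [hc]
    exact le_trans (ENNReal.toReal_mono ENNReal.one_ne_top prob_le_one) (by norm_num)
  have hLrw : (μ A * μ B * μ C).toReal = c * (μ B * μ C).toReal := by
    rw [mul_assoc, ENNReal.toReal_mul]
  -- homoclinic error terms
  have hepsB := heps T S hT hS hhom hB
  have hepsC := heps T S hT hS hhom hC
  -- pair mixing for B, C (real version)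
  have hBCr : Tendsto (fun n : ℕ => (μ (B ∩ (⇑T)^[n] '' C)).toReal) atTop
      (nhds ((μ B * μ C).toReal)) :=
    (ENNReal.tendsto_toReal_iff (fun n => measure_ne_top μ _) (by finiteness)).mpr
      (hmix B C hB hC)
  -- mean ergodic theorem data
  set κ := koop μ S hS with hκdef
  set xA : Lp ℝ 2 μ := indicatorConstLp 2 hA (measure_ne_top μ A) (1:ℝ) with hxA
  set oneL : Lp ℝ 2 μ :=
    indicatorConstLp 2 MeasurableSet.univ (measure_ne_top μ Set.univ) (1:ℝ) with honeL
  have hMET := met S hS hSerg hA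
  have hMETnorm : Tendsto
      (fun K => ‖birkhoffAverage ℝ (⇑κ) _root_.id K xA - c • oneL‖) atTop (nhds 0) := by
    have h := (hMET.sub (tendsto_const_nhds (x := c • oneL))).norm
    have h2 : ((μ A).toReal • (indicatorConstLp 2 MeasurableSet.univ
        (measure_ne_top μ Set.univ) (1:ℝ)) : Lp ℝ 2 μ) = c • oneL := by
      rw [← honeL, ← hc]
    rw [h2] at h
    simpa only [sub_self, norm_zero] using h
  rw [Metric.tendsto_atTop]
  intro ε hε
  obtain ⟨K, hKnorm, hK1⟩ : ∃ K : ℕ,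
      ‖birkhoffAverage ℝ (⇑κ) _root_.id K xA - c • oneL‖ < ε/4 ∧ 1 ≤ K := by
    have h1 := (hMETnorm.eventually (gt_mem_nhds (show (0:ℝ) < ε/4 by linarith))).and
      (eventually_ge_atTop 1)
    exact h1.exists
  have hKne : (K:ℝ) ≠ 0 := Nat.cast_ne_zero.mpr (by omega)
  -- real versions of homoclinic errors multiplied by K
  have hepsBr : Tendsto (fun m : ℕ =>
      (K:ℝ) * (μ ((⇑S ⁻¹' ((⇑T)^[m] '' B)) ∆ ((⇑T)^[m] '' B))).toReal) atTop (nhds 0) := by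
    have h0 := (ENNReal.tendsto_toReal_iff (fun m => measure_ne_top μ _)
      (by finiteness)).mpr hepsB
    simpa using h0.const_mul (K:ℝ)
  have hepsCr : Tendsto (fun m : ℕ =>
      (K:ℝ) * (μ ((⇑S ⁻¹' ((⇑T)^[m] '' C)) ∆ ((⇑T)^[m] '' C))).toReal) atTop (nhds 0) := by
    have h0 := (ENNReal.tendsto_toReal_iff (fun m => measure_ne_top μ _)
      (by finiteness)).mpr hepsC
    simpa using h0.const_mul (K:ℝ)
  obtain ⟨M1, hM1⟩ := Filter.eventually_atTop.mp
    (hepsBr.eventually (gt_mem_nhds (show (0:ℝ) < ε/8 by linarith)))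
  obtain ⟨M2, hM2⟩ := Filter.eventually_atTop.mp
    (hepsCr.eventually (gt_mem_nhds (show (0:ℝ) < ε/8 by linarith)))
  obtain ⟨N1, hN1⟩ := Metric.tendsto_atTop.mp hBCr (ε/4) (by linarith)
  refine ⟨(max M1 M2, N1), ?_⟩
  rintro ⟨m, n⟩ hmn
  have hm : max M1 M2 ≤ m := hmn.1
  have hn : N1 ≤ n := hmn.2
  -- the sets
  set XB : Set X := (⇑T)^[m] '' B with hXBdef
  set XC : Set X := (⇑T)^[m+n] '' C with hXCdef
  have hXB : MeasurableSet XB := meas_image T m hB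
  have hXC : MeasurableSet XC := meas_image T (m+n) hC
  set F : Set X := XB ∩ XC with hFdef
  have hF : MeasurableSet F := hXB.inter hXC
  have hμF : μ F = μ (B ∩ (⇑T)^[n] '' C) := by
    have h1 : XC = (⇑T)^[m] '' ((⇑T)^[n] '' C) := by
      rw [hXCdef, ← Set.image_comp, ← Function.iterate_add]
    rw [hFdef, hXBdef, h1, ← Set.image_inter (T.injective.iterate m)]
    exact measure_image_iterate T hT m (hB.inter (meas_image T n hC))
  set eB : ℝ := (μ ((⇑S ⁻¹' XB) ∆ XB)).toReal with heB
  set eC : ℝ := (μ ((⇑S ⁻¹' XC) ∆ XC)).toReal with heC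
  -- step 1: per-k comparison
  have hIk : ∀ k : ℕ, k ≤ K →
      |(μ (A ∩ XB ∩ XC)).toReal - (μ ((⇑S)^[k] ⁻¹' A ∩ F)).toReal|
        ≤ (K:ℝ) * eB + (K:ℝ) * eC := by
    intro k hk
    have hpre : μ (A ∩ XB ∩ XC) = μ ((⇑S)^[k] ⁻¹' A ∩ (⇑S)^[k] ⁻¹' XB ∩ (⇑S)^[k] ⁻¹' XC) := by
      rw [← Set.preimage_inter, ← Set.preimage_inter]
      exact ((hS.iterate k).measure_preimage ((hA.inter hXB).inter hXC).nullMeasurableSet).symm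
    have hkB : (μ (((⇑S)^[k] ⁻¹' XB) ∆ XB)).toReal ≤ (K:ℝ) * eB := by
      have h := eps_pow S hS k hXB
      have h2 := ENNReal.toReal_mono (by finiteness) h
      rw [ENNReal.toReal_mul, ENNReal.toReal_natCast] at h2
      refine le_trans h2 (mul_le_mul_of_nonneg_right ?_ ENNReal.toReal_nonneg)
      exact_mod_cast hk
    have hkC : (μ (((⇑S)^[k] ⁻¹' XC) ∆ XC)).toReal ≤ (K:ℝ) * eC := by
      have h := eps_pow S hS k hXC
      have h2 := ENNReal.toReal_mono (by finiteness) h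
      rw [ENNReal.toReal_mul, ENNReal.toReal_natCast] at h2
      refine le_trans h2 (mul_le_mul_of_nonneg_right ?_ ENNReal.toReal_nonneg)
      exact_mod_cast hk
    set Dk := (⇑S)^[k] ⁻¹' A
    set Ek := (⇑S)^[k] ⁻¹' XB
    set Fk := (⇑S)^[k] ⁻¹' XC
    have hstep1 : |(μ (Dk ∩ Ek ∩ Fk)).toReal - (μ (Dk ∩ XB ∩ Fk)).toReal|
        ≤ (μ (Ek ∆ XB)).toReal := by
      refine le_trans (aux_abs μ _ _) (ENNReal.toReal_mono (measure_ne_top _ _) ?_)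
      exact measure_mono (symmDiff_triple_subset Dk Ek Fk XB)
    have hstep2 : |(μ (Dk ∩ XB ∩ Fk)).toReal - (μ (Dk ∩ XB ∩ XC)).toReal|
        ≤ (μ (Fk ∆ XC)).toReal := by
      refine le_trans (aux_abs μ _ _) (ENNReal.toReal_mono (measure_ne_top _ _) ?_)
      exact measure_mono (symmDiff_pair_subset (Dk ∩ XB) Fk XC)
    have hFrw : Dk ∩ F = Dk ∩ XB ∩ XC := by rw [hFdef, Set.inter_assoc]
    rw [hpre, hFrw]
    calc |(μ (Dk ∩ Ek ∩ Fk)).toReal - (μ (Dk ∩ XB ∩ XC)).toReal|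
        ≤ |(μ (Dk ∩ Ek ∩ Fk)).toReal - (μ (Dk ∩ XB ∩ Fk)).toReal|
          + |(μ (Dk ∩ XB ∩ Fk)).toReal - (μ (Dk ∩ XB ∩ XC)).toReal| := abs_sub_le _ _ _
      _ ≤ (μ (Ek ∆ XB)).toReal + (μ (Fk ∆ XC)).toReal := add_le_add hstep1 hstep2
      _ ≤ (K:ℝ) * eB + (K:ℝ) * eC := add_le_add hkB hkC
  -- step 2: averaging
  set Jav : ℝ := (K:ℝ)⁻¹ * ∑ k ∈ Finset.range K, (μ ((⇑S)^[k] ⁻¹' A ∩ F)).toReal with hJavdef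
  have havg : |(μ (A ∩ XB ∩ XC)).toReal - Jav| ≤ (K:ℝ) * eB + (K:ℝ) * eC := by
    have hrw : (μ (A ∩ XB ∩ XC)).toReal - Jav
        = (K:ℝ)⁻¹ * ∑ k ∈ Finset.range K,
            ((μ (A ∩ XB ∩ XC)).toReal - (μ ((⇑S)^[k] ⁻¹' A ∩ F)).toReal) := by
      rw [Finset.sum_sub_distrib, mul_sub, hJavdef, Finset.sum_const, Finset.card_range,
        nsmul_eq_mul, ← mul_assoc, inv_mul_cancel₀ hKne, one_mul]
    rw [hrw, abs_mul, abs_inv, Nat.abs_cast]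
    have hsum : |∑ k ∈ Finset.range K,
        ((μ (A ∩ XB ∩ XC)).toReal - (μ ((⇑S)^[k] ⁻¹' A ∩ F)).toReal)|
        ≤ (K:ℝ) * ((K:ℝ) * eB + (K:ℝ) * eC) := by
      refine le_trans (Finset.abs_sum_le_sum_abs _ _) ?_
      refine le_trans (Finset.sum_le_sum (fun k hk =>
        hIk k (le_of_lt (Finset.mem_range.mp hk)))) ?_
      rw [Finset.sum_const, Finset.card_range, nsmul_eq_mul]
    calc (K:ℝ)⁻¹ * |∑ k ∈ Finset.range K,
          ((μ (A ∩ XB ∩ XC)).toReal - (μ ((⇑S)^[k] ⁻¹' A ∩ F)).toReal)|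
        ≤ (K:ℝ)⁻¹ * ((K:ℝ) * ((K:ℝ) * eB + (K:ℝ) * eC)) :=
          mul_le_mul_of_nonneg_left hsum (by positivity)
      _ = (K:ℝ) * eB + (K:ℝ) * eC := by
          rw [← mul_assoc, inv_mul_cancel₀ hKne, one_mul]
  -- step 3: inner product / MET
  set yF : Lp ℝ 2 μ := indicatorConstLp 2 hF (measure_ne_top μ F) (1:ℝ) with hyF
  have hJav2 : |Jav - c * (μ F).toReal| ≤ ‖birkhoffAverage ℝ (⇑κ) _root_.id K xA - c • oneL‖ := by
    have hbk : ⟪birkhoffAverage ℝ (⇑κ) _root_.id K xA, yF⟫ = Jav := by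
      rw [birkhoffAverage, real_inner_smul_left, birkhoffSum, sum_inner, hJavdef]
      congr 1
      refine Finset.sum_congr rfl fun k _ => ?_
      simpa using inner_koop_iter S hS hA hF k
    have honeF : ⟪(c • oneL : Lp ℝ 2 μ), yF⟫ = c * (μ F).toReal := by
      rw [real_inner_smul_left, honeL, hyF, inner_indic MeasurableSet.univ hF, Set.univ_inter]
    calc |Jav - c * (μ F).toReal|
        = |⟪birkhoffAverage ℝ (⇑κ) _root_.id K xA - c • oneL, yF⟫| := by
          rw [inner_sub_left, hbk, honeF]
      _ ≤ ‖birkhoffAverage ℝ (⇑κ) _root_.id K xA - c • oneL‖ * ‖yF‖ :=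
          abs_real_inner_le_norm _ _
      _ ≤ ‖birkhoffAverage ℝ (⇑κ) _root_.id K xA - c • oneL‖ * 1 := by
          refine mul_le_mul_of_nonneg_left ?_ (norm_nonneg _)
          rw [hyF, norm_indicatorConstLp (by norm_num) (by norm_num)]
          rw [norm_one, one_mul]
          refine Real.rpow_le_one ENNReal.toReal_nonneg ?_ (by positivity)
          exact le_trans (ENNReal.toReal_mono ENNReal.one_ne_top prob_le_one) (by norm_num)
      _ = ‖birkhoffAverage ℝ (⇑κ) _root_.id K xA - c • oneL‖ := mul_one _
  -- step 4: pair mixing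
  have hmixstep : |c * (μ F).toReal - c * (μ B * μ C).toReal| < ε/4 := by
    rw [← mul_sub, abs_mul, abs_of_nonneg hc0, hμF]
    have := hN1 n hn
    rw [Real.dist_eq] at this
    calc c * |(μ (B ∩ (⇑T)^[n] '' C)).toReal - (μ B * μ C).toReal|
        ≤ 1 * |(μ (B ∩ (⇑T)^[n] '' C)).toReal - (μ B * μ C).toReal| :=
          mul_le_mul_of_nonneg_right hc1 (abs_nonneg _)
      _ = |(μ (B ∩ (⇑T)^[n] '' C)).toReal - (μ B * μ C).toReal| := one_mul _
      _ < ε/4 := this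
  -- combine
  have hB' : (K:ℝ) * eB < ε/8 := hM1 m (le_trans (le_max_left _ _) hm)
  have hC' : (K:ℝ) * eC < ε/8 := hM2 (m+n) (le_trans (le_trans (le_max_right _ _) hm)
    (Nat.le_add_right m n))
  rw [Real.dist_eq, hLrw]
  have first : |(μ (A ∩ XB ∩ XC)).toReal - Jav| < ε/8 + ε/8 :=
    lt_of_le_of_lt havg (add_lt_add hB' hC')
  have second : |Jav - c * (μ F).toReal| < ε/4 := lt_of_le_of_lt hJav2 hKnorm
  calc |(μ (A ∩ XB ∩ XC)).toReal - c * (μ B * μ C).toReal|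
      ≤ |(μ (A ∩ XB ∩ XC)).toReal - Jav| + |Jav - c * (μ B * μ C).toReal| := abs_sub_le _ _ _
    _ ≤ |(μ (A ∩ XB ∩ XC)).toReal - Jav|
        + (|Jav - c * (μ F).toReal| + |c * (μ F).toReal - c * (μ B * μ C).toReal|) :=
        add_le_add_right (abs_sub_le _ _ _) _
    _ < (ε/8 + ε/8) + (ε/4 + ε/4) := add_lt_add first (add_lt_add second hmixstep)
    _ < ε := by linarith
end

section
/- Let S belong to the homoclinic group of T, i.e., μ(T^{-n}S T^n B Δ B) → 0 as n → ∞ for every measurable B. Then for any fixed integer i and any measurable sets A,B,C, μ(S^{-i}A ∩ T^m B ∩ T^{m+n}C) − μ(A ∩ T^m B ∩ T^{m+n}C) → 0 as m,n → +∞. -/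
/-!
The homoclinic permutations of `T` form a group, so `σ = S⁻ⁱ` is homoclinic as well. Since `σ`
preserves `μ`, `μ(A ∩ TᵐB ∩ Tᵐ⁺ⁿC) = μ(σA ∩ σTᵐB ∩ σTᵐ⁺ⁿC)`, which differs from
`μ(σA ∩ TᵐB ∩ Tᵐ⁺ⁿC)` by at most `μ(σTᵐB ∆ TᵐB) + μ(σTᵐ⁺ⁿC ∆ Tᵐ⁺ⁿC)`, and both terms tend to `0`.
-/

open MeasureTheory Filter Topology
open scoped symmDiff

namespace MeasureTheory

variable {X : Type*} [MeasurableSpace X] {μ : Measure X}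

lemma abs_measureReal_sub_le_measureReal_symmDiff_of_isFiniteMeasure [IsFiniteMeasure μ]
    (s t : Set X) : |μ.real s - μ.real t| ≤ μ.real (s ∆ t) := by
  have key : ∀ u v : Set X, μ.real u ≤ μ.real v + μ.real (u ∆ v) := fun u v =>
    (measureReal_mono fun x hx => by by_cases hv : x ∈ v <;> simp_all [Set.mem_symmDiff]).trans
      (measureReal_union_le v (u ∆ v))
  refine abs_sub_le_iff.mpr ⟨?_, ?_⟩
  · linarith [key s t]
  · linarith [symmDiff_comm s t ▸ key t s]

lemma MeasurePreserving.measure_image_equiv {e : X ≃ᵐ X} (he : MeasurePreserving e μ μ)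
    (s : Set X) : μ (e '' s) = μ s := by
  rw [e.image_eq_preimage_symm, (he.symm e).measure_preimage_equiv]

lemma measure_image_iterate {f : X → X} (hf : ∀ s, μ (f '' s) = μ s) (n : ℕ) (s : Set X) :
    μ (f^[n] '' s) = μ s := by
  induction n with
  | zero => simp
  | succ n ih => rw [Function.iterate_succ', Set.image_comp, hf, ih]

lemma measure_image_symmDiff_image {f : X → X} (hf : ∀ s, μ (f '' s) = μ s)
    (hinj : Function.Injective f) (s t : Set X) : μ ((f '' s) ∆ (f '' t)) = μ (s ∆ t) := by
  rw [← Set.image_symmDiff hinj, hf]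

/-- The homoclinic group of `T`, with `μ(T⁻ⁿ S Tⁿ B ∆ B)` written as `μ(S Tⁿ B ∆ Tⁿ B)`. -/
def homoclinicGroup (μ : Measure X) (T : X → X) : Subgroup (Equiv.Perm X) where
  carrier := {f | (∀ s, μ (f '' s) = μ s) ∧ ∀ B, MeasurableSet B →
    Tendsto (fun n => μ ((f '' (T^[n] '' B)) ∆ (T^[n] '' B))) atTop (𝓝 0)}
  one_mem' := ⟨fun s => by simp, fun B _ => by simp⟩
  mul_mem' := by
    rintro f g ⟨hf, hf_lim⟩ ⟨hg, hg_lim⟩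
    refine ⟨fun s => by rw [Equiv.Perm.coe_mul, Set.image_comp, hf, hg], fun B hB => ?_⟩
    refine tendsto_of_tendsto_of_tendsto_of_le_of_le tendsto_const_nhds
      (by simpa using (hg_lim B hB).add (hf_lim B hB)) (fun _ => zero_le) fun n => ?_
    set E := T^[n] '' B
    calc μ (((f * g) '' E) ∆ E) ≤ μ ((f '' (g '' E)) ∆ (f '' E)) + μ ((f '' E) ∆ E) := by
          rw [Equiv.Perm.coe_mul, Set.image_comp]; exact measure_symmDiff_le _ _ _
      _ = μ ((g '' E) ∆ E) + μ ((f '' E) ∆ E) := by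
          rw [measure_image_symmDiff_image hf f.injective]
  inv_mem' := by
    rintro f ⟨hf, hf_lim⟩
    have hinv : ∀ s, f '' (⇑f⁻¹ '' s) = s := fun s => f.image_symm_image s
    refine ⟨fun s => by rw [← hf, hinv], fun B hB => (hf_lim B hB).congr fun n => ?_⟩
    set E := T^[n] '' B
    rw [← measure_image_symmDiff_image hf f.injective (⇑f⁻¹ '' E), hinv, symmDiff_comm]

lemma mem_homoclinicGroup {T : X → X} {f : Equiv.Perm X} :
    f ∈ homoclinicGroup μ T ↔ (∀ s, μ (f '' s) = μ s) ∧ ∀ B, MeasurableSet B →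
      Tendsto (fun n => μ ((f '' (T^[n] '' B)) ∆ (T^[n] '' B))) atTop (𝓝 0) :=
  Iff.rfl

lemma abs_measureReal_image_inter_sub_le [IsFiniteMeasure μ] {f : Equiv.Perm X}
    (hf : ∀ s, μ (f '' s) = μ s) (A P Q : Set X) :
    |μ.real (f '' A ∩ P ∩ Q) - μ.real (A ∩ P ∩ Q)|
      ≤ μ.real ((f '' P) ∆ P) + μ.real ((f '' Q) ∆ Q) := by
  have hfAPQ : μ.real (A ∩ P ∩ Q) = μ.real (f '' A ∩ f '' P ∩ f '' Q) := by
    rw [← Set.image_inter f.injective, ← Set.image_inter f.injective, measureReal_def,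
      measureReal_def, hf]
  have hsub : (f '' A ∩ P ∩ Q) ∆ (f '' A ∩ f '' P ∩ f '' Q)
      ⊆ ((f '' P) ∆ P) ∪ ((f '' Q) ∆ Q) := by
    intro x
    simp only [Set.mem_symmDiff, Set.mem_inter_iff, Set.mem_union]
    tauto
  rw [hfAPQ]
  exact (abs_measureReal_sub_le_measureReal_symmDiff_of_isFiniteMeasure _ _).trans
    ((measureReal_mono hsub).trans (measureReal_union_le _ _))

end MeasureTheory

open MeasureTheory

theorem homoclinic_shift_asymptotic_general
    {X : Type*} [MeasurableSpace X] (μ : Measure X) [IsProbabilityMeasure μ]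
    (T : X ≃ᵐ X) (hT : MeasurePreserving T μ μ)
    (S : Equiv.Perm X) (hSmeas' : Measurable S.symm)
    (hS : MeasurePreserving S μ μ)
    (hhom : ∀ B : Set X, MeasurableSet B →
      Tendsto (fun n : ℕ => μ (((⇑T.symm)^[n] '' (S '' ((⇑T)^[n] '' B))) ∆ B))
        atTop (nhds 0))
    (i : ℤ) (A B C : Set X) (hB : MeasurableSet B)
    (hC : MeasurableSet C) :
    Tendsto
      (fun p : ℕ × ℕ =>
        (μ ((⇑(S ^ (-i)) '' A) ∩ (⇑T)^[p.1] '' B ∩ (⇑T)^[p.1 + p.2] '' C)).toReal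
          - (μ (A ∩ (⇑T)^[p.1] '' B ∩ (⇑T)^[p.1 + p.2] '' C)).toReal)
      atTop (nhds 0) := by
  have hS_image : ∀ s, μ (S '' s) = μ s :=
    MeasurePreserving.measure_image_equiv (e := ⟨S, hS.measurable, hSmeas'⟩) hS
  have hT_iter : ∀ n s, μ ((⇑T)^[n] '' s) = μ s :=
    measure_image_iterate hT.measure_image_equiv
  have hS_mem : S ∈ homoclinicGroup μ T := by
    refine mem_homoclinicGroup.mpr ⟨hS_image, fun B hB => (hhom B hB).congr fun n => ?_⟩
    rw [← hT_iter n, Set.image_symmDiff (T.injective.iterate n),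
      (Function.LeftInverse.iterate T.apply_symm_apply n).image_image]
  obtain ⟨hσ, hσ_lim⟩ := mem_homoclinicGroup.mp (zpow_mem hS_mem (-i))
  have hlim : ∀ D, MeasurableSet D → Tendsto (fun n => μ.real ((⇑(S ^ (-i)) '' ((⇑T)^[n] '' D))
      ∆ ((⇑T)^[n] '' D))) atTop (𝓝 0) := fun D hD =>
    (ENNReal.tendsto_toReal ENNReal.zero_ne_top).comp (hσ_lim D hD)
  have hm : Tendsto (fun p : ℕ × ℕ => p.1) atTop atTop :=
    monotone_fst.tendsto_atTop_atTop fun m => ⟨(m, 0), le_rfl⟩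
  have hmn : Tendsto (fun p : ℕ × ℕ => p.1 + p.2) atTop atTop :=
    tendsto_atTop_mono (fun p => Nat.le_add_right _ _) hm
  refine squeeze_zero_norm (fun p => abs_measureReal_image_inter_sub_le hσ A _ _) ?_
  simpa using ((hlim B hB).comp hm).add ((hlim C hC).comp hmn)

/-- If `S` is homoclinic for `T` (`μ(T^{-n} S T^n B Δ B) → 0` for every measurable `B`),
then for any fixed integer `i` and measurable sets `A, B, C`,
`μ(S^{-i} A ∩ T^m B ∩ T^{m+n} C) − μ(A ∩ T^m B ∩ T^{m+n} C) → 0` as `m, n → ∞`. -/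
theorem homoclinic_shift_asymptotic
    {X : Type*} [MeasurableSpace X] (μ : Measure X) [IsProbabilityMeasure μ]
    (T : X ≃ᵐ X) (hT : MeasurePreserving T μ μ)
    (S : Equiv.Perm X) (hSmeas : Measurable S) (hSmeas' : Measurable S.symm)
    (hS : MeasurePreserving S μ μ)
    (hhom : ∀ B : Set X, MeasurableSet B →
      Tendsto (fun n : ℕ => μ (((⇑T.symm)^[n] '' (S '' ((⇑T)^[n] '' B))) ∆ B))
        atTop (nhds 0))
    (i : ℤ) (A B C : Set X) (hA : MeasurableSet A) (hB : MeasurableSet B)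
    (hC : MeasurableSet C) :
    Tendsto
      (fun p : ℕ × ℕ =>
        (μ ((⇑(S ^ (-i)) '' A) ∩ (⇑T)^[p.1] '' B ∩ (⇑T)^[p.1 + p.2] '' C)).toReal
          - (μ (A ∩ (⇑T)^[p.1] '' B ∩ (⇑T)^[p.1 + p.2] '' C)).toReal)
      atTop (nhds 0) :=
  homoclinic_shift_asymptotic_general μ T hT S hSmeas' hS hhom i A B C hB hC
end

section
/- Suppose T is a mixing automorphism such that every self-joining of order 3 with pairwise independence is the product measure μ³ (property S₃). If along sequences m_i, n_i → +∞ the quantities μ(A ∩ T^{m_i}B ∩ T^{m_i+n_i}C) converge for all measurable A,B,C, then the limit equals μ(A)μ(B)μ(C). Consequently, a mixing automorphism with property S₃ is mixing of multiplicity 2. -/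
open MeasureTheory Filter

section Aux

open Set MeasurableSpace
open scoped ENNReal NNReal symmDiff


namespace S3Aux

abbrev K : Type := ℕ → Bool
abbrev K3 : Type := K × K × K

/-- projection to the first `N` coordinates -/
def proj (N : ℕ) (x : K) : Fin N → Bool := fun j => x (j : ℕ)

lemma measurable_proj (N : ℕ) : Measurable (proj N) :=
  measurable_pi_lambda _ fun j => measurable_pi_apply _

lemma continuous_proj (N : ℕ) : Continuous (proj N) :=
  continuous_pi fun j => continuous_apply _

/-- restriction map between levels -/
def res {N M : ℕ} (h : N ≤ M) (v : Fin M → Bool) : Fin N → Bool := fun j => v (Fin.castLE h j)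

lemma res_comp_proj {N M : ℕ} (h : N ≤ M) : res h ∘ proj M = proj N := by
  funext x j
  simp [res, proj, Fin.coe_castLE]

/-- cylinder sets in `K` -/
def cylK : Set (Set K) := {D | ∃ N S, D = proj N ⁻¹' S}

/-- the triple projection -/
def Q (N : ℕ) (p : K3) : (Fin N → Bool) × ((Fin N → Bool) × (Fin N → Bool)) :=
  (proj N p.1, proj N p.2.1, proj N p.2.2)

lemma measurable_Q (N : ℕ) : Measurable (Q N) :=
  ((measurable_proj N).comp measurable_fst).prodMk
    ((((measurable_proj N).comp (measurable_fst.comp measurable_snd))).prodMk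
      ((measurable_proj N).comp (measurable_snd.comp measurable_snd)))

lemma continuous_Q (N : ℕ) : Continuous (Q N) :=
  ((continuous_proj N).comp continuous_fst).prodMk
    ((((continuous_proj N).comp (continuous_fst.comp continuous_snd))).prodMk
      ((continuous_proj N).comp (continuous_snd.comp continuous_snd)))

/-- cylinder sets in `K3` -/
def cyl3 : Set (Set K3) := {E | ∃ N S, E = Q N ⁻¹' S}

lemma cylK_lift {N M : ℕ} (h : N ≤ M) (S : Set (Fin N → Bool)) :
    proj N ⁻¹' S = proj M ⁻¹' (res h ⁻¹' S) := by
  rw [← preimage_comp, res_comp_proj]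

lemma res_proj {N M : ℕ} (h : N ≤ M) (x : K) : res h (proj M x) = proj N x :=
  congrFun (res_comp_proj h) x

lemma cyl3_lift {N M : ℕ} (h : N ≤ M) (S : Set ((Fin N → Bool) × ((Fin N → Bool) × (Fin N → Bool)))) :
    Q N ⁻¹' S = Q M ⁻¹' ((fun w => (res h w.1, res h w.2.1, res h w.2.2)) ⁻¹' S) := by
  rw [← preimage_comp]
  have : (fun w : (Fin M → Bool) × ((Fin M → Bool) × (Fin M → Bool)) =>
      (res h w.1, res h w.2.1, res h w.2.2)) ∘ Q M = Q N := by
    funext p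
    simp only [Function.comp_apply, Q, res_proj h]
  rw [this]

namespace cyl3

lemma univ_mem : (univ : Set K3) ∈ cyl3 := ⟨0, univ, by simp⟩

lemma empty_mem : (∅ : Set K3) ∈ cyl3 := ⟨0, ∅, by simp⟩

lemma compl_mem {E : Set K3} (hE : E ∈ cyl3) : Eᶜ ∈ cyl3 := by
  obtain ⟨N, S, rfl⟩ := hE
  exact ⟨N, Sᶜ, by simp⟩

lemma inter_mem {E F : Set K3} (hE : E ∈ cyl3) (hF : F ∈ cyl3) : E ∩ F ∈ cyl3 := by
  obtain ⟨N, S, rfl⟩ := hE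
  obtain ⟨M, S', rfl⟩ := hF
  rw [cyl3_lift (le_max_left N M) S, cyl3_lift (le_max_right N M) S']
  exact ⟨max N M, _, (preimage_inter).symm⟩

lemma union_mem {E F : Set K3} (hE : E ∈ cyl3) (hF : F ∈ cyl3) : E ∪ F ∈ cyl3 := by
  obtain ⟨N, S, rfl⟩ := hE
  obtain ⟨M, S', rfl⟩ := hF
  rw [cyl3_lift (le_max_left N M) S, cyl3_lift (le_max_right N M) S']
  exact ⟨max N M, _, (preimage_union).symm⟩

lemma biUnion_mem {s : Finset ℕ} {f : ℕ → Set K3} (hf : ∀ n ∈ s, f n ∈ cyl3) :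
    (⋃ n ∈ s, f n) ∈ cyl3 := by
  classical
  induction s using Finset.induction with
  | empty => simpa using empty_mem
  | @insert a s' ha ih =>
    rw [Finset.set_biUnion_insert]
    exact union_mem (hf a (Finset.mem_insert_self a s'))
      (ih fun n hn => hf n (Finset.mem_insert_of_mem hn))

lemma measurableSet {E : Set K3} (hE : E ∈ cyl3) : MeasurableSet E := by
  obtain ⟨N, S, rfl⟩ := hE
  exact measurable_Q N S.to_countable.measurableSet

lemma isOpen {E : Set K3} (hE : E ∈ cyl3) : IsOpen E := by
  obtain ⟨N, S, rfl⟩ := hE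
  exact (isOpen_discrete S).preimage (continuous_Q N)

lemma isCompact {E : Set K3} (hE : E ∈ cyl3) : IsCompact E := by
  have : IsClosed E := by
    rw [← compl_compl E]
    exact (isOpen (compl_mem hE)).isClosed_compl
  exact this.isCompact

end cyl3

namespace cylK

lemma univ_mem : (univ : Set K) ∈ cylK := ⟨0, univ, by simp⟩

lemma empty_mem : (∅ : Set K) ∈ cylK := ⟨0, ∅, by simp⟩

lemma compl_mem {D : Set K} (hD : D ∈ cylK) : Dᶜ ∈ cylK := by
  obtain ⟨N, S, rfl⟩ := hD
  exact ⟨N, Sᶜ, by simp⟩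

lemma union_mem {D D' : Set K} (hD : D ∈ cylK) (hD' : D' ∈ cylK) : D ∪ D' ∈ cylK := by
  obtain ⟨N, S, rfl⟩ := hD
  obtain ⟨M, S', rfl⟩ := hD'
  rw [cylK_lift (le_max_left N M) S, cylK_lift (le_max_right N M) S']
  exact ⟨max N M, _, (preimage_union).symm⟩

lemma inter_mem {D D' : Set K} (hD : D ∈ cylK) (hD' : D' ∈ cylK) : D ∩ D' ∈ cylK := by
  obtain ⟨N, S, rfl⟩ := hD
  obtain ⟨M, S', rfl⟩ := hD'
  rw [cylK_lift (le_max_left N M) S, cylK_lift (le_max_right N M) S']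
  exact ⟨max N M, _, (preimage_inter).symm⟩

lemma isSetAlgebra : IsSetAlgebra cylK :=
  ⟨empty_mem, fun _ h => compl_mem h, fun _ _ h h' => union_mem h h'⟩

lemma measurableSet {D : Set K} (hD : D ∈ cylK) : MeasurableSet D := by
  obtain ⟨N, S, rfl⟩ := hD
  exact measurable_proj N S.to_countable.measurableSet

lemma isPiSystem : IsPiSystem cylK := fun s hs t ht _ => inter_mem hs ht

lemma generateFrom_eq : generateFrom cylK = MeasurableSpace.pi := by
  refine le_antisymm (generateFrom_le fun D hD => measurableSet hD) ?_
  rw [MeasurableSpace.pi]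
  refine iSup_le fun n => ?_
  refine measurable_iff_comap_le.mp ?_
  intro t _
  apply measurableSet_generateFrom
  refine ⟨n + 1, {v | v ⟨n, Nat.lt_succ_self n⟩ ∈ t}, ?_⟩
  ext x
  simp [proj]

end cylK

/-- products of cylinders are cylinders -/
lemma prod_preimage (N : ℕ) (S1 S2 S3 : Set (Fin N → Bool)) :
    (proj N ⁻¹' S1) ×ˢ ((proj N ⁻¹' S2) ×ˢ (proj N ⁻¹' S3)) = Q N ⁻¹' (S1 ×ˢ (S2 ×ˢ S3)) := by
  ext p
  simp [Q, Set.mem_prod]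

lemma prod_mem_cyl3 {DA DB DC : Set K} (hA : DA ∈ cylK) (hB : DB ∈ cylK) (hC : DC ∈ cylK) :
    DA ×ˢ (DB ×ˢ DC) ∈ cyl3 := by
  obtain ⟨N1, S1, rfl⟩ := hA
  obtain ⟨N2, S2, rfl⟩ := hB
  obtain ⟨N3, S3, rfl⟩ := hC
  rw [cylK_lift (le_max_left N1 (max N2 N3)) S1,
    cylK_lift ((le_max_left N2 N3).trans (le_max_right N1 (max N2 N3))) S2,
    cylK_lift ((le_max_right N2 N3).trans (le_max_right N1 (max N2 N3))) S3,
    prod_preimage]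
  exact ⟨max N1 (max N2 N3), _, rfl⟩

lemma fst_preimage_mem_cyl3 {D : Set K} (hD : D ∈ cylK) :
    (fun p : K3 => p.1) ⁻¹' D ∈ cyl3 := by
  have : (fun p : K3 => p.1) ⁻¹' D = D ×ˢ ((univ : Set K) ×ˢ (univ : Set K)) := by
    ext p; simp [Set.mem_prod]
  rw [this]
  exact prod_mem_cyl3 hD cylK.univ_mem cylK.univ_mem

lemma snd1_preimage_mem_cyl3 {D : Set K} (hD : D ∈ cylK) :
    (fun p : K3 => p.2.1) ⁻¹' D ∈ cyl3 := by
  have : (fun p : K3 => p.2.1) ⁻¹' D = (univ : Set K) ×ˢ (D ×ˢ (univ : Set K)) := by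
    ext p; simp [Set.mem_prod]
  rw [this]
  exact prod_mem_cyl3 cylK.univ_mem hD cylK.univ_mem

lemma snd2_preimage_mem_cyl3 {D : Set K} (hD : D ∈ cylK) :
    (fun p : K3 => p.2.2) ⁻¹' D ∈ cyl3 := by
  have : (fun p : K3 => p.2.2) ⁻¹' D = (univ : Set K) ×ˢ ((univ : Set K) ×ˢ D) := by
    ext p; simp [Set.mem_prod]
  rw [this]
  exact prod_mem_cyl3 cylK.univ_mem cylK.univ_mem hD

lemma le_generateFrom_cyl3 : (inferInstance : MeasurableSpace K3) ≤ generateFrom cyl3 := by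
  have key : ∀ g : K3 → K, (∀ D ∈ cylK, g ⁻¹' D ∈ cyl3) →
      @Measurable K3 K (generateFrom cyl3) MeasurableSpace.pi g := by
    intro g hg
    have hmeas : @Measurable K3 K (generateFrom cyl3) (generateFrom cylK) g :=
      @measurable_generateFrom K3 K (generateFrom cyl3) cylK g
        (fun t ht => measurableSet_generateFrom (hg t ht))
    rw [cylK.generateFrom_eq] at hmeas
    exact hmeas
  have h1 := key _ (fun D hD => fst_preimage_mem_cyl3 hD)
  have h2 := key _ (fun D hD => snd1_preimage_mem_cyl3 hD)
  have h3 := key _ (fun D hD => snd2_preimage_mem_cyl3 hD)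
  have hid : @Measurable K3 K3 (generateFrom cyl3) Prod.instMeasurableSpace
      (fun p => (p.1, (p.2.1, p.2.2))) := Measurable.prod h1 (Measurable.prod h2 h3)
  intro s hs
  simpa using hid hs



section Lam

variable {ι : Type*} (U : Ultrafilter ι) (κ : ι → Measure K3)

/-- ultrafilter limit of the measures of a set -/
noncomputable def lam (E : Set K3) : ℝ≥0∞ := limUnder U fun i => κ i E

lemma lam_tendsto (E : Set K3) : Tendsto (fun i => κ i E) U (nhds (lam U κ E)) := by
  apply tendsto_nhds_limUnder
  obtain ⟨a, -, ha⟩ := isCompact_univ.ultrafilter_le_nhds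
    (U.map fun i => κ i E) (by rw [principal_univ]; exact le_top)
  exact ⟨a, ha⟩

variable {U κ}

lemma lam_eq_of_forall {E : Set K3} {c : ℝ≥0∞} (h : ∀ i, κ i E = c) : lam U κ E = c := by
  refine tendsto_nhds_unique (lam_tendsto U κ E) ?_
  have : (fun i => κ i E) = fun _ => c := funext h
  rw [this]
  exact tendsto_const_nhds

lemma lam_empty : lam U κ ∅ = 0 := lam_eq_of_forall fun i => measure_empty

lemma lam_univ (hκ : ∀ i, IsProbabilityMeasure (κ i)) : lam U κ univ = 1 :=
  lam_eq_of_forall fun i => (hκ i).measure_univ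

lemma lam_mono {E F : Set K3} (h : E ⊆ F) : lam U κ E ≤ lam U κ F :=
  le_of_tendsto_of_tendsto' (lam_tendsto U κ E) (lam_tendsto U κ F)
    fun i => measure_mono h

lemma lam_union_le (E F : Set K3) : lam U κ (E ∪ F) ≤ lam U κ E + lam U κ F :=
  le_of_tendsto_of_tendsto' (lam_tendsto U κ (E ∪ F))
    ((lam_tendsto U κ E).add (lam_tendsto U κ F)) fun i => measure_union_le _ _

lemma lam_biUnion_le (f : ℕ → Set K3) (t : Finset ℕ) :
    lam U κ (⋃ n ∈ t, f n) ≤ ∑ n ∈ t, lam U κ (f n) := by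
  classical
  induction t using Finset.induction with
  | empty => simpa using lam_empty.le
  | @insert a s' ha ih =>
    rw [Finset.set_biUnion_insert, Finset.sum_insert ha]
    exact (lam_union_le _ _).trans (add_le_add le_rfl ih)

lemma lam_inter_add_diff (t : Set K3) {E : Set K3} (hE : MeasurableSet E) :
    lam U κ (t ∩ E) + lam U κ (t \ E) = lam U κ t := by
  refine tendsto_nhds_unique ((lam_tendsto U κ (t ∩ E)).add (lam_tendsto U κ (t \ E))) ?_
  have : (fun i => κ i (t ∩ E) + κ i (t \ E)) = fun i => κ i t :=
    funext fun i => measure_inter_add_diff t hE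
  rw [← this] at *
  exact (lam_tendsto U κ t).congr (fun i => (measure_inter_add_diff t hE).symm)

end Lam

/-- The main compactness statement: from pointwise marginal control we extract a limit
probability measure along the ultrafilter, representing limits on all Borel rectangles. -/
theorem exists_limit_measure {ι : Type*} (U : Ultrafilter ι) (κ : ι → Measure K3)
    (hκ : ∀ i, IsProbabilityMeasure (κ i))
    (μ' : Measure K) (hμ' : IsProbabilityMeasure μ')
    (hm1 : ∀ i ⦃D : Set K⦄, MeasurableSet D → κ i ((fun p : K3 => p.1) ⁻¹' D) = μ' D)
    (hm2 : ∀ i ⦃D : Set K⦄, MeasurableSet D → κ i ((fun p : K3 => p.2.1) ⁻¹' D) = μ' D)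
    (hm3 : ∀ i ⦃D : Set K⦄, MeasurableSet D → κ i ((fun p : K3 => p.2.2) ⁻¹' D) = μ' D) :
    ∃ κ' : Measure K3, IsProbabilityMeasure κ' ∧
      ∀ A' B' C' : Set K, MeasurableSet A' → MeasurableSet B' → MeasurableSet C' →
        Tendsto (fun i => κ i (A' ×ˢ B' ×ˢ C')) U (nhds (κ' (A' ×ˢ B' ×ˢ C'))) := by
  classical
  haveI := hμ'
  set m : Set K3 → ℝ≥0∞ := fun E => if E ∈ cyl3 then lam U κ E else ⊤ with hm_def
  have hm0 : m ∅ = 0 := by rw [hm_def]; simp [cyl3.empty_mem, lam_empty]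
  set O := OuterMeasure.ofFunction m hm0 with hO_def
  have hOle : ∀ E ∈ cyl3, O E ≤ lam U κ E := fun E hE =>
    (OuterMeasure.ofFunction_le E).trans_eq (if_pos hE)
  have hle : ∀ E ∈ cyl3, lam U κ E ≤ O E := by
    intro E hE
    rw [hO_def, OuterMeasure.ofFunction_apply]
    refine le_iInf fun f => le_iInf fun hf => ?_
    by_cases hall : ∀ n, f n ∈ cyl3
    · obtain ⟨t, ht⟩ := (cyl3.isCompact hE).elim_finite_subcover f
        (fun n => cyl3.isOpen (hall n)) hf
      calc lam U κ E ≤ lam U κ (⋃ n ∈ t, f n) := lam_mono ht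
        _ ≤ ∑ n ∈ t, lam U κ (f n) := lam_biUnion_le f t
        _ = ∑ n ∈ t, m (f n) := by
            refine Finset.sum_congr rfl fun n _ => ?_
            rw [hm_def]; simp [hall n]
        _ ≤ ∑' n, m (f n) := ENNReal.sum_le_tsum t
    · push_neg at hall
      obtain ⟨n, hn⟩ := hall
      have : m (f n) = ⊤ := by rw [hm_def]; simp [hn]
      calc lam U κ E ≤ ⊤ := le_top
        _ = m (f n) := this.symm
        _ ≤ ∑' n, m (f n) := ENNReal.le_tsum n
  have hcar : ∀ E ∈ cyl3, O.IsCaratheodory E := by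
    intro E hE
    refine OuterMeasure.ofFunction_caratheodory fun t => ?_
    by_cases ht : t ∈ cyl3
    · have h1 : t ∩ E ∈ cyl3 := cyl3.inter_mem ht hE
      have h2 : t \ E ∈ cyl3 := by
        rw [diff_eq]; exact cyl3.inter_mem ht (cyl3.compl_mem hE)
      rw [hm_def]
      simp only [if_pos h1, if_pos h2, if_pos ht]
      exact (lam_inter_add_diff t (cyl3.measurableSet hE)).le
    · rw [hm_def]; simp [ht]
  have hms : (inferInstance : MeasurableSpace K3) ≤ O.caratheodory := by
    refine le_generateFrom_cyl3.trans (generateFrom_le fun E hE => ?_)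
    rw [OuterMeasure.isCaratheodory_iff] at *
    exact hcar E hE
  set κ' : Measure K3 := O.toMeasure hms with hκ'_def
  have hκcyl : ∀ E ∈ cyl3, κ' E = lam U κ E := by
    intro E hE
    rw [hκ'_def, toMeasure_apply O hms (cyl3.measurableSet hE)]
    exact le_antisymm (hOle E hE) (hle E hE)
  have hprob : IsProbabilityMeasure κ' := by
    constructor
    rw [hκcyl univ cyl3.univ_mem]
    exact lam_univ hκ
  haveI := hprob
  -- the three marginals of κ' are μ'
  have hmargs : ∀ (g : K3 → K), Measurable g → (∀ D ∈ cylK, g ⁻¹' D ∈ cyl3) →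
      (∀ i ⦃D : Set K⦄, MeasurableSet D → κ i (g ⁻¹' D) = μ' D) →
      ∀ ⦃A' : Set K⦄, MeasurableSet A' → κ' (g ⁻¹' A') = μ' A' := by
    intro g hg hgc hgm
    have hmap : κ'.map g = μ' := by
      haveI : IsProbabilityMeasure (κ'.map g) := Measure.isProbabilityMeasure_map hg.aemeasurable
      refine ext_of_generate_finite cylK cylK.generateFrom_eq.symm cylK.isPiSystem ?_ ?_
      · intro D hD
        rw [Measure.map_apply hg (cylK.measurableSet hD), hκcyl _ (hgc D hD)]
        exact lam_eq_of_forall fun i => hgm i (cylK.measurableSet hD)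
      · rw [measure_univ, measure_univ]
    intro A' hA'
    rw [← hmap, Measure.map_apply hg hA']
  have hk1 := hmargs _ measurable_fst (fun D hD => fst_preimage_mem_cyl3 hD) hm1
  have hk2 := hmargs _ (measurable_fst.comp measurable_snd)
    (fun D hD => snd1_preimage_mem_cyl3 hD) hm2
  have hk3 := hmargs _ (measurable_snd.comp measurable_snd)
    (fun D hD => snd2_preimage_mem_cyl3 hD) hm3
  -- approximation of Borel sets by cylinders
  have happrox : ∀ ⦃A' : Set K⦄, MeasurableSet A' → ∀ δ : ℝ≥0∞, δ ≠ 0 →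
      ∃ D ∈ cylK, μ' (A' ∆ D) < δ := by
    have hdense : μ'.MeasureDense cylK :=
      Measure.MeasureDense.of_generateFrom_isSetAlgebra_finite μ' cylK.isSetAlgebra
        cylK.generateFrom_eq.symm
    intro A' hA' δ hδ
    rcases eq_top_or_lt_top δ with rfl | hδt
    · exact ⟨∅, cylK.empty_mem, measure_lt_top μ' _⟩
    · have hδR : 0 < δ.toReal := ENNReal.toReal_pos hδ hδt.ne
      obtain ⟨D, hD, hlt⟩ := hdense.approx A' hA' (measure_ne_top μ' A') δ.toReal hδR
      rw [ENNReal.ofReal_toReal hδt.ne] at hlt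
      exact ⟨D, hD, hlt⟩
  refine ⟨κ', hprob, ?_⟩
  intro A' B' C' hA' hB' hC'
  suffices h : κ' (A' ×ˢ B' ×ˢ C') = lam U κ (A' ×ˢ B' ×ˢ C') by
    rw [h]; exact lam_tendsto U κ _
  -- ε-argument
  have main : ∀ ε : ℝ≥0, 0 < ε →
      κ' (A' ×ˢ B' ×ˢ C') ≤ lam U κ (A' ×ˢ B' ×ˢ C') + ε ∧
      lam U κ (A' ×ˢ B' ×ˢ C') ≤ κ' (A' ×ˢ B' ×ˢ C') + ε := by
    intro ε hε
    set δ : ℝ≥0∞ := (ε : ℝ≥0∞) / 6 with hδ_def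
    have hδ0 : δ ≠ 0 := by
      rw [hδ_def]
      simp [ENNReal.div_eq_zero_iff, ENNReal.coe_ne_zero.mpr hε.ne']
    obtain ⟨DA, hDA, hDAlt⟩ := happrox hA' δ hδ0
    obtain ⟨DB, hDB, hDBlt⟩ := happrox hB' δ hδ0
    obtain ⟨DC, hDC, hDClt⟩ := happrox hC' δ hδ0
    set R : Set K3 := DA ×ˢ DB ×ˢ DC with hR_def
    have hRcyl : R ∈ cyl3 := prod_mem_cyl3 hDA hDB hDC
    set st1 : Set K3 := (fun p : K3 => p.1) ⁻¹' (A' ∆ DA) with hst1_def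
    set st2 : Set K3 := (fun p : K3 => p.2.1) ⁻¹' (B' ∆ DB) with hst2_def
    set st3 : Set K3 := (fun p : K3 => p.2.2) ⁻¹' (C' ∆ DC) with hst3_def
    have hmA : MeasurableSet (A' ∆ DA) := hA'.symmDiff (cylK.measurableSet hDA)
    have hmB : MeasurableSet (B' ∆ DB) := hB'.symmDiff (cylK.measurableSet hDB)
    have hmC : MeasurableSet (C' ∆ DC) := hC'.symmDiff (cylK.measurableSet hDC)
    -- subset relations
    have hsub1 : A' ×ˢ B' ×ˢ C' ⊆ R ∪ (st1 ∪ (st2 ∪ st3)) := by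
      rintro ⟨a, b, c⟩ ⟨ha, hb, hc⟩
      by_cases h1 : a ∈ DA
      · by_cases h2 : b ∈ DB
        · by_cases h3 : c ∈ DC
          · exact Or.inl ⟨h1, h2, h3⟩
          · exact Or.inr (Or.inr (Or.inr (mem_symmDiff.mpr (Or.inl ⟨hc, h3⟩))))
        · exact Or.inr (Or.inr (Or.inl (mem_symmDiff.mpr (Or.inl ⟨hb, h2⟩))))
      · exact Or.inr (Or.inl (mem_symmDiff.mpr (Or.inl ⟨ha, h1⟩)))
    have hsub2 : R ⊆ A' ×ˢ B' ×ˢ C' ∪ (st1 ∪ (st2 ∪ st3)) := by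
      rintro ⟨a, b, c⟩ ⟨ha, hb, hc⟩
      by_cases h1 : a ∈ A'
      · by_cases h2 : b ∈ B'
        · by_cases h3 : c ∈ C'
          · exact Or.inl ⟨h1, h2, h3⟩
          · exact Or.inr (Or.inr (Or.inr (mem_symmDiff.mpr (Or.inr ⟨hc, h3⟩))))
        · exact Or.inr (Or.inr (Or.inl (mem_symmDiff.mpr (Or.inr ⟨hb, h2⟩))))
      · exact Or.inr (Or.inl (mem_symmDiff.mpr (Or.inr ⟨ha, h1⟩)))
    -- strip values
    have hκst1 : κ' st1 = μ' (A' ∆ DA) := hk1 hmA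
    have hκst2 : κ' st2 = μ' (B' ∆ DB) := hk2 hmB
    have hκst3 : κ' st3 = μ' (C' ∆ DC) := hk3 hmC
    have hlst1 : lam U κ st1 = μ' (A' ∆ DA) := lam_eq_of_forall fun i => hm1 i hmA
    have hlst2 : lam U κ st2 = μ' (B' ∆ DB) := lam_eq_of_forall fun i => hm2 i hmB
    have hlst3 : lam U κ st3 = μ' (C' ∆ DC) := lam_eq_of_forall fun i => hm3 i hmC
    have hstrips : μ' (A' ∆ DA) + (μ' (B' ∆ DB) + μ' (C' ∆ DC)) ≤ δ + (δ + δ) :=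
      add_le_add hDAlt.le (add_le_add hDBlt.le hDClt.le)
    have h6 : δ + (δ + δ) + (δ + (δ + δ)) ≤ (ε : ℝ≥0∞) := by
      have : δ + (δ + δ) + (δ + (δ + δ)) = 6 * ((ε : ℝ≥0∞) / 6) := by
        rw [hδ_def]; ring
      rw [this]
      exact ENNReal.mul_div_le
    constructor
    · calc κ' (A' ×ˢ B' ×ˢ C')
          ≤ κ' (R ∪ (st1 ∪ (st2 ∪ st3))) := measure_mono hsub1
        _ ≤ κ' R + (κ' st1 + (κ' st2 + κ' st3)) := by
            refine (measure_union_le _ _).trans (add_le_add le_rfl ?_)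
            exact (measure_union_le _ _).trans (add_le_add le_rfl (measure_union_le _ _))
        _ ≤ κ' R + (δ + (δ + δ)) := by
            rw [hκst1, hκst2, hκst3]
            exact add_le_add le_rfl hstrips
        _ = lam U κ R + (δ + (δ + δ)) := by rw [hκcyl R hRcyl]
        _ ≤ (lam U κ (A' ×ˢ B' ×ˢ C') + (δ + (δ + δ))) + (δ + (δ + δ)) := by
            refine add_le_add ?_ le_rfl
            refine (lam_mono hsub2).trans ?_
            refine (lam_union_le _ _).trans (add_le_add le_rfl ?_)
            refine ((lam_union_le _ _).trans (add_le_add le_rfl (lam_union_le _ _))).trans ?_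
            rw [hlst1, hlst2, hlst3]
            exact hstrips
        _ ≤ lam U κ (A' ×ˢ B' ×ˢ C') + (ε : ℝ≥0∞) := by
            rw [add_assoc]
            exact add_le_add le_rfl h6
    · calc lam U κ (A' ×ˢ B' ×ˢ C')
          ≤ lam U κ (R ∪ (st1 ∪ (st2 ∪ st3))) := lam_mono hsub1
        _ ≤ lam U κ R + (δ + (δ + δ)) := by
            refine (lam_union_le _ _).trans ?_
            refine add_le_add le_rfl ?_
            refine ((lam_union_le _ _).trans (add_le_add le_rfl (lam_union_le _ _))).trans ?_
            rw [hlst1, hlst2, hlst3]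
            exact hstrips
        _ = κ' R + (δ + (δ + δ)) := by rw [hκcyl R hRcyl]
        _ ≤ (κ' (A' ×ˢ B' ×ˢ C') + (δ + (δ + δ))) + (δ + (δ + δ)) := by
            refine add_le_add ?_ le_rfl
            refine (measure_mono hsub2).trans ?_
            refine (measure_union_le _ _).trans (add_le_add le_rfl ?_)
            refine ((measure_union_le _ _).trans
              (add_le_add le_rfl (measure_union_le _ _))).trans ?_
            rw [hκst1, hκst2, hκst3]
            exact hstrips
        _ ≤ κ' (A' ×ˢ B' ×ˢ C') + (ε : ℝ≥0∞) := by
            rw [add_assoc]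
            exact add_le_add le_rfl h6
  refine le_antisymm ?_ ?_
  · exact ENNReal.le_of_forall_pos_le_add fun ε hε _ => (main ε hε).1
  · exact ENNReal.le_of_forall_pos_le_add fun ε hε _ => (main ε hε).2



lemma image_iterate_eq_preimage {X : Type*} [MeasurableSpace X] (T : X ≃ᵐ X) (k : ℕ)
    (B : Set X) : (⇑T)^[k] '' B = (⇑T.symm)^[k] ⁻¹' B := by
  have hL : Function.LeftInverse (⇑T.symm) (⇑T) := T.symm_apply_apply
  have hR : Function.LeftInverse (⇑T) (⇑T.symm) := T.apply_symm_apply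
  ext x
  constructor
  · rintro ⟨b, hb, rfl⟩
    rw [mem_preimage, hL.iterate k]
    exact hb
  · intro hx
    exact ⟨(⇑T.symm)^[k] x, hx, hR.iterate k x⟩

lemma commute_symm {X : Type*} [MeasurableSpace X] (T : X ≃ᵐ X) :
    Function.Commute (⇑T) (⇑T.symm) :=
  fun x => (T.apply_symm_apply x).trans (T.symm_apply_apply x).symm

/-- The core convergence result along an ultrafilter. -/
theorem core {X : Type*} [MeasurableSpace X] [StandardBorelSpace X]
    (μ : Measure X) [IsProbabilityMeasure μ]
    (T : X ≃ᵐ X) (hT : MeasurePreserving T μ μ)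
    (hmix : ∀ A B : Set X, MeasurableSet A → MeasurableSet B →
      Tendsto (fun m : ℕ => μ (A ∩ (⇑T)^[m] '' B)) atTop (nhds (μ A * μ B)))
    (hS3 : ∀ ν : Measure (X × X × X), IsProbabilityMeasure ν →
      MeasurePreserving (fun p : X × X × X => (T p.1, T p.2.1, T p.2.2)) ν ν →
      ν.map (fun p : X × X × X => (p.1, p.2.1)) = μ.prod μ →
      ν.map (fun p : X × X × X => (p.1, p.2.2)) = μ.prod μ →
      ν.map (fun p : X × X × X => p.2) = μ.prod μ →
      ν = μ.prod (μ.prod μ))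
    {ι : Type*} (U : Ultrafilter ι) (mm nn : ι → ℕ)
    (hm : Tendsto mm U atTop) (hn : Tendsto nn U atTop)
    (A B C : Set X) (hA : MeasurableSet A) (hB : MeasurableSet B) (hC : MeasurableSet C) :
    Tendsto (fun i => μ (A ∩ (⇑T)^[mm i] '' B ∩ (⇑T)^[mm i + nn i] '' C)) U
      (nhds (μ A * μ B * μ C)) := by
  classical
  obtain ⟨e, he_meas, he_inj⟩ := measurable_injection_nat_bool_of_countablySeparated X
  have he : MeasurableEmbedding e := he_meas.measurableEmbedding he_inj
  set S : X → X := ⇑T.symm with hS_def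
  have hS : MeasurePreserving S μ μ := MeasurePreserving.symm T hT
  have hSmeas : Measurable S := T.symm.measurable
  have hSk : ∀ k, MeasurePreserving S^[k] μ μ := fun k => hS.iterate k
  set θ : ι → X → K3 := fun i x => (e x, e (S^[mm i] x), e (S^[mm i + nn i] x)) with hθ_def
  have hθ : ∀ i, Measurable (θ i) := fun i =>
    (he_meas).prodMk (((he_meas.comp (hSmeas.iterate (mm i)))).prodMk
      (he_meas.comp (hSmeas.iterate (mm i + nn i))))
  set κi : ι → Measure K3 := fun i => μ.map (θ i) with hκi_def
  have hκ : ∀ i, IsProbabilityMeasure (κi i) := fun i =>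
    Measure.isProbabilityMeasure_map (hθ i).aemeasurable
  set μ' : Measure K := μ.map e with hμ'_def
  have hμ' : IsProbabilityMeasure μ' := Measure.isProbabilityMeasure_map he_meas.aemeasurable
  have hμ'app : ∀ ⦃D : Set K⦄, MeasurableSet D → μ' D = μ (e ⁻¹' D) := fun D hD =>
    Measure.map_apply he_meas hD
  have hm1 : ∀ i ⦃D : Set K⦄, MeasurableSet D → κi i ((fun p : K3 => p.1) ⁻¹' D) = μ' D := by
    intro i D hD
    calc κi i ((fun p : K3 => p.1) ⁻¹' D)
        = μ (θ i ⁻¹' ((fun p : K3 => p.1) ⁻¹' D)) :=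
          Measure.map_apply (hθ i)
            (show MeasurableSet ((fun p : K3 => p.1) ⁻¹' D) from measurable_fst hD)
      _ = μ (e ⁻¹' D) := rfl
      _ = μ' D := (hμ'app hD).symm
  have hm2 : ∀ i ⦃D : Set K⦄, MeasurableSet D → κi i ((fun p : K3 => p.2.1) ⁻¹' D) = μ' D := by
    intro i D hD
    calc κi i ((fun p : K3 => p.2.1) ⁻¹' D)
        = μ (θ i ⁻¹' ((fun p : K3 => p.2.1) ⁻¹' D)) :=
          Measure.map_apply (hθ i) (show MeasurableSet ((fun p : K3 => p.2.1) ⁻¹' D) from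
            (measurable_fst.comp measurable_snd) hD)
      _ = μ (S^[mm i] ⁻¹' (e ⁻¹' D)) := rfl
      _ = μ (e ⁻¹' D) := (hSk (mm i)).measure_preimage (he_meas hD).nullMeasurableSet
      _ = μ' D := (hμ'app hD).symm
  have hm3 : ∀ i ⦃D : Set K⦄, MeasurableSet D → κi i ((fun p : K3 => p.2.2) ⁻¹' D) = μ' D := by
    intro i D hD
    calc κi i ((fun p : K3 => p.2.2) ⁻¹' D)
        = μ (θ i ⁻¹' ((fun p : K3 => p.2.2) ⁻¹' D)) :=
          Measure.map_apply (hθ i) (show MeasurableSet ((fun p : K3 => p.2.2) ⁻¹' D) from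
            (measurable_snd.comp measurable_snd) hD)
      _ = μ (S^[mm i + nn i] ⁻¹' (e ⁻¹' D)) := rfl
      _ = μ (e ⁻¹' D) := (hSk (mm i + nn i)).measure_preimage (he_meas hD).nullMeasurableSet
      _ = μ' D := (hμ'app hD).symm
  obtain ⟨κ', hκ'prob, hκ'rect⟩ := exists_limit_measure U κi hκ μ' hμ' hm1 hm2 hm3
  -- rectangle values
  have hrectval : ∀ (A₀ B₀ C₀ : Set X), MeasurableSet A₀ → MeasurableSet B₀ →
      MeasurableSet C₀ → ∀ i, κi i ((e '' A₀) ×ˢ (e '' B₀) ×ˢ (e '' C₀)) =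
        μ (A₀ ∩ (⇑T)^[mm i] '' B₀ ∩ (⇑T)^[mm i + nn i] '' C₀) := by
    intro A₀ B₀ C₀ hA₀ hB₀ hC₀ i
    have hset : θ i ⁻¹' ((e '' A₀) ×ˢ (e '' B₀) ×ˢ (e '' C₀)) =
        A₀ ∩ S^[mm i] ⁻¹' B₀ ∩ S^[mm i + nn i] ⁻¹' C₀ := by
      ext x
      simp only [hθ_def, mem_preimage, mem_prod, mem_inter_iff,
        he_inj.mem_set_image]
      tauto
    rw [show κi i ((e '' A₀) ×ˢ (e '' B₀) ×ˢ (e '' C₀)) =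
      μ (θ i ⁻¹' ((e '' A₀) ×ˢ (e '' B₀) ×ˢ (e '' C₀))) from
      Measure.map_apply (hθ i) ((he.measurableSet_image.2 hA₀).prod
        ((he.measurableSet_image.2 hB₀).prod (he.measurableSet_image.2 hC₀)))]
    rw [hset, image_iterate_eq_preimage T (mm i), image_iterate_eq_preimage T (mm i + nn i)]
  have hkey : ∀ (A₀ B₀ C₀ : Set X), MeasurableSet A₀ → MeasurableSet B₀ → MeasurableSet C₀ →
      Tendsto (fun i => μ (A₀ ∩ (⇑T)^[mm i] '' B₀ ∩ (⇑T)^[mm i + nn i] '' C₀)) U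
        (nhds (κ' ((e '' A₀) ×ˢ (e '' B₀) ×ˢ (e '' C₀)))) := by
    intro A₀ B₀ C₀ hA₀ hB₀ hC₀
    have h := hκ'rect (e '' A₀) (e '' B₀) (e '' C₀) (he.measurableSet_image.2 hA₀)
      (he.measurableSet_image.2 hB₀) (he.measurableSet_image.2 hC₀)
    rwa [show (fun i => κi i ((e '' A₀) ×ˢ (e '' B₀) ×ˢ (e '' C₀))) =
      fun i => μ (A₀ ∩ (⇑T)^[mm i] '' B₀ ∩ (⇑T)^[mm i + nn i] '' C₀) from
      funext (hrectval A₀ B₀ C₀ hA₀ hB₀ hC₀)] at h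
  -- the limit joining on X³
  set emb3 : X × X × X → K3 := fun q => (e q.1, e q.2.1, e q.2.2) with hemb3_def
  have hemb3 : MeasurableEmbedding emb3 := he.prodMap (he.prodMap he)
  set ν : Measure (X × X × X) := κ'.comap emb3 with hν_def
  have hν_apply : ∀ ⦃s : Set (X × X × X)⦄, MeasurableSet s → ν s = κ' (emb3 '' s) :=
    fun s hs => Measure.comap_apply emb3 hemb3.injective
      (fun t ht => hemb3.measurableSet_image.2 ht) κ' hs
  have himg : ∀ A₀ B₀ C₀ : Set X,
      emb3 '' (A₀ ×ˢ B₀ ×ˢ C₀) = (e '' A₀) ×ˢ (e '' B₀) ×ˢ (e '' C₀) := by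
    intro A₀ B₀ C₀
    ext p
    constructor
    · rintro ⟨⟨a, b, c⟩, ⟨ha, hb, hc⟩, rfl⟩
      exact ⟨⟨a, ha, rfl⟩, ⟨b, hb, rfl⟩, ⟨c, hc, rfl⟩⟩
    · rintro ⟨⟨a, ha, h1⟩, ⟨b, hb, h2⟩, ⟨c, hc, h3⟩⟩
      refine ⟨(a, b, c), ⟨ha, hb, hc⟩, ?_⟩
      show (e a, e b, e c) = p
      rw [h1, h2, h3]
  have hν_rect : ∀ (A₀ B₀ C₀ : Set X), MeasurableSet A₀ → MeasurableSet B₀ →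
      MeasurableSet C₀ →
      Tendsto (fun i => μ (A₀ ∩ (⇑T)^[mm i] '' B₀ ∩ (⇑T)^[mm i + nn i] '' C₀)) U
        (nhds (ν (A₀ ×ˢ B₀ ×ˢ C₀))) := by
    intro A₀ B₀ C₀ hA₀ hB₀ hC₀
    rw [hν_apply ((hA₀.prod (hB₀.prod hC₀))), himg]
    exact hkey A₀ B₀ C₀ hA₀ hB₀ hC₀
  have himage_univ : ∀ k : ℕ, (⇑T)^[k] '' (univ : Set X) = univ := by
    intro k
    rw [image_iterate_eq_preimage, preimage_univ]
  have hν_rect_eq : ∀ (A₀ B₀ C₀ : Set X), MeasurableSet A₀ → MeasurableSet B₀ →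
      MeasurableSet C₀ → ∀ {c : ℝ≥0∞},
      Tendsto (fun i => μ (A₀ ∩ (⇑T)^[mm i] '' B₀ ∩ (⇑T)^[mm i + nn i] '' C₀)) U (nhds c) →
      ν (A₀ ×ˢ B₀ ×ˢ C₀) = c := by
    intro A₀ B₀ C₀ hA₀ hB₀ hC₀ c hc
    exact tendsto_nhds_unique (hν_rect A₀ B₀ C₀ hA₀ hB₀ hC₀) hc
  have hν_prob : IsProbabilityMeasure ν := by
    constructor
    rw [show (univ : Set (X × X × X)) = (univ : Set X) ×ˢ (univ : Set X) ×ˢ (univ : Set X)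
      from by simp [univ_prod_univ]]
    refine hν_rect_eq univ univ univ .univ .univ .univ ?_
    have h2 : (fun i => μ ((univ : Set X) ∩ (⇑T)^[mm i] '' univ ∩
        (⇑T)^[mm i + nn i] '' univ)) = fun _ => 1 := by
      funext i
      simp [himage_univ]
    rw [h2]
    exact tendsto_const_nhds
  haveI := hν_prob
  -- iterates commute with T-preimages
  have hcomm : ∀ (k : ℕ) (D : Set X), (⇑T)^[k] '' (⇑T ⁻¹' D) = ⇑T ⁻¹' ((⇑T)^[k] '' D) := by
    intro k D
    rw [image_iterate_eq_preimage, image_iterate_eq_preimage, ← preimage_comp, ← preimage_comp,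
      ((commute_symm T).iterate_right k).comp_eq]
  -- measure preservation of the diagonal map
  set G : X × X × X → X × X × X := fun p => (T p.1, T p.2.1, T p.2.2) with hG_def
  have hGmeas : Measurable G :=
    (T.measurable.comp measurable_fst).prodMk
      (((T.measurable.comp (measurable_fst.comp measurable_snd))).prodMk
        (T.measurable.comp (measurable_snd.comp measurable_snd)))
  -- the π-system of triple rectangles
  set rectX : Set (Set X) := {s | MeasurableSet s} with hrectX_def
  set rect3 : Set (Set (X × X × X)) := image2 (· ×ˢ ·) rectX (image2 (· ×ˢ ·) rectX rectX)
    with hrect3_def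
  have hgen : generateFrom rect3 = (inferInstance : MeasurableSpace (X × X × X)) := by
    rw [hrect3_def, hrectX_def]
    exact generateFrom_eq_prod generateFrom_measurableSet generateFrom_prod
      isCountablySpanning_measurableSet
      (isCountablySpanning_measurableSet.prod isCountablySpanning_measurableSet)
  have hpi : IsPiSystem rect3 := by
    rw [hrect3_def, hrectX_def]
    exact isPiSystem_measurableSet.prod isPiSystem_prod
  have hGpres : MeasurePreserving G ν ν := by
    refine ⟨hGmeas, ?_⟩
    haveI : IsProbabilityMeasure (ν.map G) := Measure.isProbabilityMeasure_map hGmeas.aemeasurable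
    refine ext_of_generate_finite rect3 hgen.symm hpi ?_ (by rw [measure_univ, measure_univ])
    rintro s ⟨A₀, hA₀, bc, ⟨B₀, hB₀, C₀, hC₀, rfl⟩, rfl⟩
    replace hA₀ : MeasurableSet A₀ := hA₀
    replace hB₀ : MeasurableSet B₀ := hB₀
    replace hC₀ : MeasurableSet C₀ := hC₀
    rw [Measure.map_apply hGmeas (hA₀.prod (hB₀.prod hC₀))]
    have hpre : G ⁻¹' (A₀ ×ˢ B₀ ×ˢ C₀) = (⇑T ⁻¹' A₀) ×ˢ (⇑T ⁻¹' B₀) ×ˢ (⇑T ⁻¹' C₀) := rfl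
    rw [hpre]
    refine (hν_rect_eq _ _ _ (T.measurable hA₀) (T.measurable hB₀) (T.measurable hC₀) ?_).trans
      (hν_rect_eq A₀ B₀ C₀ hA₀ hB₀ hC₀ (hν_rect A₀ B₀ C₀ hA₀ hB₀ hC₀)).symm
    have hseq : ∀ i, μ ((⇑T ⁻¹' A₀) ∩ (⇑T)^[mm i] '' (⇑T ⁻¹' B₀) ∩
        (⇑T)^[mm i + nn i] '' (⇑T ⁻¹' C₀)) =
        μ (A₀ ∩ (⇑T)^[mm i] '' B₀ ∩ (⇑T)^[mm i + nn i] '' C₀) := by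
      intro i
      rw [hcomm, hcomm, ← preimage_inter, ← preimage_inter]
      refine hT.measure_preimage ?_
      exact (hA₀.inter (by
        rw [image_iterate_eq_preimage]
        exact (hSmeas.iterate (mm i)) hB₀)).inter (by
        rw [image_iterate_eq_preimage]
        exact (hSmeas.iterate (mm i + nn i)) hC₀) |>.nullMeasurableSet
    rw [show (fun i => μ ((⇑T ⁻¹' A₀) ∩ (⇑T)^[mm i] '' (⇑T ⁻¹' B₀) ∩
        (⇑T)^[mm i + nn i] '' (⇑T ⁻¹' C₀))) =
      fun i => μ (A₀ ∩ (⇑T)^[mm i] '' B₀ ∩ (⇑T)^[mm i + nn i] '' C₀) from funext hseq]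
    exact hν_rect A₀ B₀ C₀ hA₀ hB₀ hC₀
  -- marginal (1,2)
  have h12 : ν.map (fun p : X × X × X => (p.1, p.2.1)) = μ.prod μ := by
    have hf : Measurable (fun p : X × X × X => (p.1, p.2.1)) :=
      measurable_fst.prodMk (measurable_fst.comp measurable_snd)
    refine (Measure.prod_eq fun s t hs ht => ?_).symm
    rw [Measure.map_apply hf (hs.prod ht)]
    have hpre : (fun p : X × X × X => (p.1, p.2.1)) ⁻¹' (s ×ˢ t) =
        s ×ˢ t ×ˢ (univ : Set X) := by
      ext p; simp [Set.mem_prod]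
    rw [hpre]
    refine hν_rect_eq s t univ hs ht .univ ?_
    have hseq : (fun i => μ (s ∩ (⇑T)^[mm i] '' t ∩ (⇑T)^[mm i + nn i] '' univ)) =
        fun i => μ (s ∩ (⇑T)^[mm i] '' t) := by
      funext i
      rw [himage_univ, inter_univ]
    rw [hseq]
    exact (hmix s t hs ht).comp hm
  -- marginal (1,3)
  have h13 : ν.map (fun p : X × X × X => (p.1, p.2.2)) = μ.prod μ := by
    have hf : Measurable (fun p : X × X × X => (p.1, p.2.2)) :=
      measurable_fst.prodMk (measurable_snd.comp measurable_snd)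
    refine (Measure.prod_eq fun s t hs ht => ?_).symm
    rw [Measure.map_apply hf (hs.prod ht)]
    have hpre : (fun p : X × X × X => (p.1, p.2.2)) ⁻¹' (s ×ˢ t) =
        s ×ˢ (univ : Set X) ×ˢ t := by
      ext p; simp [Set.mem_prod]
    rw [hpre]
    refine hν_rect_eq s univ t hs .univ ht ?_
    have hseq : (fun i => μ (s ∩ (⇑T)^[mm i] '' univ ∩ (⇑T)^[mm i + nn i] '' t)) =
        fun i => μ (s ∩ (⇑T)^[mm i + nn i] '' t) := by
      funext i
      rw [himage_univ, inter_univ]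
    rw [hseq]
    exact (hmix s t hs ht).comp (hm.atTop_add_atTop hn)
  -- marginal (2,3)
  have h23 : ν.map (fun p : X × X × X => p.2) = μ.prod μ := by
    have hf : Measurable (fun p : X × X × X => p.2) := measurable_snd
    refine (Measure.prod_eq fun s t hs ht => ?_).symm
    rw [Measure.map_apply hf (hs.prod ht)]
    have hpre : (fun p : X × X × X => p.2) ⁻¹' (s ×ˢ t) =
        (univ : Set X) ×ˢ s ×ˢ t := by
      ext p; simp [Set.mem_prod]
    rw [hpre]
    refine hν_rect_eq univ s t .univ hs ht ?_
    have hseq : ∀ i, μ ((univ : Set X) ∩ (⇑T)^[mm i] '' s ∩ (⇑T)^[mm i + nn i] '' t) =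
        μ (s ∩ (⇑T)^[nn i] '' t) := by
      intro i
      rw [univ_inter, image_iterate_eq_preimage, image_iterate_eq_preimage,
        image_iterate_eq_preimage]
      have hiter : (⇑T.symm)^[mm i + nn i] ⁻¹' t =
          (⇑T.symm)^[mm i] ⁻¹' ((⇑T.symm)^[nn i] ⁻¹' t) := by
        ext x
        simp only [mem_preimage]
        rw [add_comm, Function.iterate_add_apply]
      rw [hiter, ← preimage_inter]
      exact (hSk (mm i)).measure_preimage
        ((hs.inter ((hSmeas.iterate (nn i)) ht)).nullMeasurableSet)
    rw [show (fun i => μ ((univ : Set X) ∩ (⇑T)^[mm i] '' s ∩ (⇑T)^[mm i + nn i] '' t)) =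
      fun i => μ (s ∩ (⇑T)^[nn i] '' t) from funext hseq]
    exact (hmix s t hs ht).comp hn
  -- apply S₃
  have hfin := hS3 ν hν_prob hGpres h12 h13 h23
  have hval : ν (A ×ˢ B ×ˢ C) = μ A * μ B * μ C := by
    rw [hfin, Measure.prod_prod, Measure.prod_prod, mul_assoc]
  rw [← hval]
  exact hν_rect A B C hA hB hC



end S3Aux

end Aux

/-- If a mixing automorphism `T` has property S₃ (every pairwise independent self-joining
of order 3 is the product measure), then every limit of `μ(A ∩ T^{mᵢ}B ∩ T^{mᵢ+nᵢ}C)`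
along sequences `mᵢ, nᵢ → ∞` is `μ(A)μ(B)μ(C)`; consequently `T` is mixing of
multiplicity 2. -/
theorem mixing_mult_two_of_S3
    {X : Type*} [MeasurableSpace X] [StandardBorelSpace X]
    (μ : Measure X) [IsProbabilityMeasure μ]
    (T : X ≃ᵐ X) (hT : MeasurePreserving T μ μ)
    (hmix : ∀ A B : Set X, MeasurableSet A → MeasurableSet B →
      Tendsto (fun m : ℕ => μ (A ∩ (⇑T)^[m] '' B)) atTop (nhds (μ A * μ B)))
    -- property S₃
    (hS3 : ∀ ν : Measure (X × X × X), IsProbabilityMeasure ν →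
      MeasurePreserving (fun p : X × X × X => (T p.1, T p.2.1, T p.2.2)) ν ν →
      ν.map (fun p : X × X × X => (p.1, p.2.1)) = μ.prod μ →
      ν.map (fun p : X × X × X => (p.1, p.2.2)) = μ.prod μ →
      ν.map (fun p : X × X × X => p.2) = μ.prod μ →
      ν = μ.prod (μ.prod μ)) :
    (∀ (m n : ℕ → ℕ), Tendsto m atTop atTop → Tendsto n atTop atTop →
      ∀ L : Set X → Set X → Set X → ENNReal,
      (∀ A B C : Set X, MeasurableSet A → MeasurableSet B → MeasurableSet C →
        Tendsto (fun i : ℕ => μ (A ∩ (⇑T)^[m i] '' B ∩ (⇑T)^[m i + n i] '' C))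
          atTop (nhds (L A B C))) →
      ∀ A B C : Set X, MeasurableSet A → MeasurableSet B → MeasurableSet C →
        L A B C = μ A * μ B * μ C) ∧
    (∀ A B C : Set X, MeasurableSet A → MeasurableSet B → MeasurableSet C →
      Tendsto (fun p : ℕ × ℕ => μ (A ∩ (⇑T)^[p.1] '' B ∩ (⇑T)^[p.1 + p.2] '' C))
        atTop (nhds (μ A * μ B * μ C))) := by
  
  constructor
  · intro m n hm hn L hL A B C hA hB hC
    have hle := Ultrafilter.of_le (atTop : Filter ℕ)
    have h1 : Tendsto (fun i : ℕ => μ (A ∩ (⇑T)^[m i] '' B ∩ (⇑T)^[m i + n i] '' C))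
        (Ultrafilter.of (atTop : Filter ℕ)) (nhds (L A B C)) :=
      (hL A B C hA hB hC).mono_left hle
    have h2 := S3Aux.core μ T hT hmix hS3 (Ultrafilter.of (atTop : Filter ℕ)) m n
      (hm.mono_left hle) (hn.mono_left hle) A B C hA hB hC
    exact tendsto_nhds_unique h1 h2
  · intro A B C hA hB hC
    refine (tendsto_iff_ultrafilter _ _ _).mpr fun U hU => ?_
    have h1 : Tendsto (Prod.fst : ℕ × ℕ → ℕ) atTop atTop := by
      rw [← Filter.prod_atTop_atTop_eq]; exact tendsto_fst
    have h2 : Tendsto (Prod.snd : ℕ × ℕ → ℕ) atTop atTop := by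
      rw [← Filter.prod_atTop_atTop_eq]; exact tendsto_snd
    exact S3Aux.core μ T hT hmix hS3 U (fun p => p.1) (fun p => p.2)
      (h1.mono_left hU) (h2.mono_left hU) A B C hA hB hC
end

section
/- With P₂, P₃, P₅ as above: if P₅ vanishes on H⊗⁵, then P₃ vanishes on H⊗³, and consequently P₂ vanishes on H⊗². In particular, the self-joining ν associated with P₂ is the product measure. -/
open MeasureTheory Filter
open scoped InnerProductSpace
open Set

set_option linter.unusedSectionVars false

namespace PV

variable {X : Type*} [MeasurableSpace X] {μ : Measure X} [IsProbabilityMeasure μ]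


lemma qmp_eval {n : ℕ} (i : Fin n) :
    Measure.QuasiMeasurePreserving (fun p : Fin n → X => p i)
      (Measure.pi fun _ : Fin n => μ) μ := by
  refine ⟨measurable_pi_apply i, Measure.AbsolutelyContinuous.mk fun s hs h0 => ?_⟩
  rw [Measure.map_apply (measurable_pi_apply i) hs]
  exact Measure.pi_eval_preimage_null _ h0

lemma ae_eval {n : ℕ} (i : Fin n) {f g : X → ℝ} (h : f =ᵐ[μ] g) :
    (fun p : Fin n → X => f (p i)) =ᵐ[Measure.pi fun _ : Fin n => μ]
      fun p => g (p i) :=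
  Measure.QuasiMeasurePreserving.ae_eq_comp (qmp_eval i) h

lemma memℒp_tensor {n : ℕ} (f : Fin n → Lp ℝ 2 μ) :
    MemLp (fun p : Fin n → X => ∏ i, f i (p i)) 2 (Measure.pi fun _ : Fin n => μ) := by
  have hm : AEStronglyMeasurable (fun p : Fin n → X => ∏ i, f i (p i))
      (Measure.pi fun _ : Fin n => μ) := by
    apply Finset.aestronglyMeasurable_fun_prod
    intro i _
    exact (Lp.aestronglyMeasurable (f i)).comp_quasiMeasurePreserving (qmp_eval i)
  rw [memLp_two_iff_integrable_sq hm]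
  letI : MeasureSpace X := ⟨μ⟩
  have : Integrable (fun p : Fin n → X => ∏ i, (f i (p i))^2)
      (Measure.pi fun _ : Fin n => μ) :=
    Integrable.fintype_prod (f := fun i x => (f i x)^2)
      (fun i => ((Lp.memLp (f i)).integrable_sq))
  exact this.congr (Eventually.of_forall fun p => by simp [Finset.prod_pow])

/-- The elementary tensor of `n` functions in `L²(μ)`, as an element of `L²(μ^⊗n)`. -/
noncomputable def tensor {n : ℕ} (f : Fin n → Lp ℝ 2 μ) :
    Lp ℝ 2 (Measure.pi fun _ : Fin n => μ) :=
  (memℒp_tensor f).toLp _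

lemma tensor_coeFn {n : ℕ} (f : Fin n → Lp ℝ 2 μ) :
    (tensor f : (Fin n → X) → ℝ) =ᵐ[Measure.pi fun _ : Fin n => μ]
      fun p => ∏ i, f i (p i) :=
  MemLp.coeFn_toLp _

/-- The constant function 1 as an element of `L²(μ)`. -/
noncomputable def one (μ : Measure X) [IsProbabilityMeasure μ] : Lp ℝ 2 μ :=
  (memLp_const (μ := μ) (1 : ℝ)).toLp _

lemma one_coeFn : (one μ : X → ℝ) =ᵐ[μ] fun _ => (1 : ℝ) := MemLp.coeFn_toLp _

lemma integral_one : ∫ x, (one μ : X → ℝ) x ∂μ = 1 := by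
  rw [integral_congr_ae one_coeFn]; simp

lemma ae_tensor_eq {n : ℕ} {f g : Fin n → Lp ℝ 2 μ}
    (h : ∀ i, (f i : X → ℝ) =ᵐ[μ] g i) :
    (fun p : Fin n → X => ∏ i, f i (p i)) =ᵐ[Measure.pi fun _ : Fin n => μ]
      fun p => ∏ i, g i (p i) := by
  have : ∀ᵐ p ∂(Measure.pi fun _ : Fin n => μ), ∀ i, f i (p i) = g i (p i) := by
    rw [eventually_all]; intro i; exact ae_eval i (h i)
  filter_upwards [this] with p hp
  exact Finset.prod_congr rfl fun i _ => hp i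

lemma inner_tensor {n : ℕ} (f g : Fin n → Lp ℝ 2 μ) :
    ⟪tensor f, tensor g⟫_ℝ = ∏ i, ⟪f i, g i⟫_ℝ := by
  rw [L2.inner_def]
  have h1 : ∀ i, ⟪f i, g i⟫_ℝ = ∫ x, f i x * g i x ∂μ := by
    intro i; rw [L2.inner_def]; simp [RCLike.inner_apply, mul_comm]
  simp only [h1, RCLike.inner_apply, conj_trivial]
  have : ∫ p, (tensor f : (Fin n → X) → ℝ) p * (tensor g : (Fin n → X) → ℝ) p
        ∂(Measure.pi fun _ : Fin n => μ)
      = ∫ p : Fin n → X, ∏ i, (f i (p i) * g i (p i)) ∂(Measure.pi fun _ : Fin n => μ) := by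
    apply integral_congr_ae
    filter_upwards [tensor_coeFn f, tensor_coeFn g] with p h1 h2
    rw [h1, h2, Finset.prod_mul_distrib]
  rw [show (∫ a, (tensor g : (Fin n → X) → ℝ) a * (tensor f : (Fin n → X) → ℝ) a
      ∂(Measure.pi fun _ : Fin n => μ)) = ∫ a, (tensor f : (Fin n → X) → ℝ) a
      * (tensor g : (Fin n → X) → ℝ) a ∂(Measure.pi fun _ : Fin n => μ) by
    simp only [mul_comm], this]
  letI : MeasureSpace X := ⟨μ⟩
  exact integral_fintype_prod_eq_prod (fun i x => f i x * g i x)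



lemma mp_removeNth {n : ℕ} (j : Fin (n + 1)) :
    MeasurePreserving (fun p : Fin (n + 1) → X => j.removeNth p)
      (Measure.pi fun _ : Fin (n + 1) => μ) (Measure.pi fun _ : Fin n => μ) := by
  have h1 := measurePreserving_piFinSuccAbove (fun _ : Fin (n + 1) => μ) j
  have h2 : MeasurePreserving (Prod.snd : X × (Fin n → X) → (Fin n → X))
      (μ.prod (Measure.pi fun _ : Fin n => μ)) (Measure.pi fun _ : Fin n => μ) := by
    constructor
    · exact measurable_snd
    · rw [Measure.map_snd_prod]; simp
  exact h2.comp h1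

lemma mp_update {n : ℕ} (j : Fin (n + 1)) :
    MeasurePreserving (fun q : (Fin (n + 1) → X) × X => Function.update q.1 j q.2)
      ((Measure.pi fun _ : Fin (n + 1) => μ).prod μ) (Measure.pi fun _ : Fin (n + 1) => μ) := by
  have h1 : MeasurePreserving (Prod.map (fun p : Fin (n + 1) → X => j.removeNth p) (id : X → X))
      ((Measure.pi fun _ : Fin (n + 1) => μ).prod μ)
      ((Measure.pi fun _ : Fin n => μ).prod μ) :=
    (mp_removeNth j).prod (MeasurePreserving.id μ)
  have h2 := Measure.measurePreserving_swap (μ := Measure.pi fun _ : Fin n => μ) (ν := μ)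
  have h3 := (measurePreserving_piFinSuccAbove (fun _ : Fin (n + 1) => μ) j).symm
  have := (h3.comp h2).comp h1
  convert this using 1
  funext q
  show Function.update q.1 j q.2
      = (MeasurableEquiv.piFinSuccAbove (fun _ => X) j).symm (q.2, j.removeNth q.1)
  rw [← Fin.insertNth_removeNth]
  rfl



lemma prod_update_eq {n : ℕ} (f : Fin (n + 1) → Lp ℝ 2 μ) (j : Fin (n + 1))
    (p : Fin (n + 1) → X) (x : X) :
    ∏ i, f i (Function.update p j x i)
      = f j x * ∏ i ∈ Finset.univ.erase j, f i (p i) := by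
  rw [← Finset.mul_prod_erase Finset.univ (fun i => f i (Function.update p j x i))
    (Finset.mem_univ j), Function.update_self]
  congr 1
  exact Finset.prod_congr rfl fun i hi => by
    rw [Function.update_of_ne (Finset.ne_of_mem_erase hi)]


lemma mp_integrable_comp {α β : Type*} [MeasurableSpace α] [MeasurableSpace β]
    {u : α → β} {μa : Measure α} {μb : Measure β} (hu : MeasurePreserving u μa μb)
    {F : β → ℝ} (hFi : Integrable F μb) : Integrable (fun a => F (u a)) μa := by
  have hm : AEStronglyMeasurable F (μa.map u) := by
    rw [hu.map_eq]; exact hFi.aestronglyMeasurable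
  have := (integrable_map_measure hm hu.aemeasurable).mp (by rwa [hu.map_eq])
  exact this

lemma mp_integral_comp {α β : Type*} [MeasurableSpace α] [MeasurableSpace β]
    {u : α → β} {μa : Measure α} {μb : Measure β} (hu : MeasurePreserving u μa μb)
    {F : β → ℝ} (hFm : AEStronglyMeasurable F μb) :
    ∫ b, F b ∂μb = ∫ a, F (u a) ∂μa := by
  have hm : AEStronglyMeasurable F (μa.map u) := by rw [hu.map_eq]; exact hFm
  rw [← hu.map_eq, integral_map hu.aemeasurable hm]

lemma mp_ae_comp {α β : Type*} [MeasurableSpace α] [MeasurableSpace β]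
    {u : α → β} {μa : Measure α} {μb : Measure β} (hu : MeasurePreserving u μa μb)
    {g g' : β → ℝ} (h : g =ᵐ[μb] g') :
    (fun a => g (u a)) =ᵐ[μa] fun a => g' (u a) :=
  MeasureTheory.ae_eq_comp hu.aemeasurable (by rwa [hu.map_eq])

lemma slice_tensor {n : ℕ} (f : Fin (n + 1) → Lp ℝ 2 μ) (j : Fin (n + 1))
    (hj : ∫ x, f j x ∂μ = 0) :
    ∀ᵐ p ∂(Measure.pi fun _ : Fin (n + 1) => μ),
      ∫ x, (tensor f : (Fin (n + 1) → X) → ℝ) (Function.update p j x) ∂μ = 0 := by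
  have hu := mp_update (μ := μ) j
  have hae : (fun q : (Fin (n + 1) → X) × X =>
        (tensor f : (Fin (n + 1) → X) → ℝ) (Function.update q.1 j q.2))
      =ᵐ[(Measure.pi fun _ : Fin (n + 1) => μ).prod μ]
      fun q => ∏ i, f i (Function.update q.1 j q.2 i) :=
    mp_ae_comp hu (tensor_coeFn f)
  have hae2 := Measure.ae_ae_of_ae_prod hae
  filter_upwards [hae2] with p hp
  have : ∫ x, (tensor f : (Fin (n + 1) → X) → ℝ) (Function.update p j x) ∂μ
      = ∫ x, f j x * ∏ i ∈ Finset.univ.erase j, f i (p i) ∂μ := by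
    apply integral_congr_ae
    filter_upwards [hp] with x hx
    rw [hx, prod_update_eq]
  rw [this, integral_mul_const, hj, zero_mul]

lemma inner_eq_zero_of_slice {n : ℕ} (g : Lp ℝ 2 (Measure.pi fun _ : Fin (n + 1) => μ))
    (j : Fin (n + 1))
    (hz : ∀ᵐ p ∂(Measure.pi fun _ : Fin (n + 1) => μ),
      ∫ x, (g : (Fin (n + 1) → X) → ℝ) (Function.update p j x) ∂μ = 0)
    (f : Fin (n + 1) → Lp ℝ 2 μ) (hfj : f j = one μ) :
    ⟪g, tensor f⟫_ℝ = 0 := by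
  have hu := mp_update (μ := μ) j
  have hFi : Integrable (fun p => (g : (Fin (n + 1) → X) → ℝ) p
      * (tensor f : (Fin (n + 1) → X) → ℝ) p) (Measure.pi fun _ : Fin (n + 1) => μ) := by
    have := L2.integrable_inner (𝕜 := ℝ) g (tensor f)
    simpa [RCLike.inner_apply, mul_comm] using this
  have hinner : ⟪g, tensor f⟫_ℝ = ∫ p, (g : (Fin (n + 1) → X) → ℝ) p
      * (tensor f : (Fin (n + 1) → X) → ℝ) p ∂(Measure.pi fun _ : Fin (n + 1) => μ) := by
    rw [L2.inner_def]; simp [RCLike.inner_apply, mul_comm]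
  have hcomp := mp_integral_comp hu hFi.aestronglyMeasurable
  have hFi' := mp_integrable_comp hu hFi
  rw [hinner, hcomp, integral_prod _ hFi']
  have hsnd : MeasurePreserving (Prod.snd : (Fin (n + 1) → X) × X → X)
      ((Measure.pi fun _ : Fin (n + 1) => μ).prod μ) μ := by
    constructor
    · exact measurable_snd
    · rw [Measure.map_snd_prod]; simp
  have h1 : (fun q : (Fin (n + 1) → X) × X =>
        (tensor f : (Fin (n + 1) → X) → ℝ) (Function.update q.1 j q.2))
      =ᵐ[(Measure.pi fun _ : Fin (n + 1) => μ).prod μ]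
      fun q => ∏ i ∈ Finset.univ.erase j, f i (q.1 i) := by
    have h2 := mp_ae_comp hu (tensor_coeFn f)
    have h3 : (fun q : (Fin (n + 1) → X) × X => (one μ : X → ℝ) q.2)
        =ᵐ[(Measure.pi fun _ : Fin (n + 1) => μ).prod μ] fun _ => (1 : ℝ) :=
      mp_ae_comp hsnd one_coeFn
    filter_upwards [h2, h3] with q hq h1q
    show (tensor f : (Fin (n + 1) → X) → ℝ) (Function.update q.1 j q.2) = _
    rw [hq]
    show ∏ i, f i (Function.update q.1 j q.2 i) = _
    rw [prod_update_eq, hfj]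
    change (one μ : X → ℝ) q.2 * _ = _
    rw [h1q, one_mul]
  have h4 := Measure.ae_ae_of_ae_prod h1
  rw [← integral_zero (Fin (n + 1) → X) ℝ (μ := Measure.pi fun _ : Fin (n + 1) => μ)]
  apply integral_congr_ae
  filter_upwards [h4, hz] with p hp hzp
  have : ∫ x, (g : (Fin (n + 1) → X) → ℝ) (Function.update p j x)
        * (tensor f : (Fin (n + 1) → X) → ℝ) (Function.update p j x) ∂μ
      = ∫ x, (g : (Fin (n + 1) → X) → ℝ) (Function.update p j x)
          * ∏ i ∈ Finset.univ.erase j, f i (p i) ∂μ := by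
    apply integral_congr_ae
    filter_upwards [hp] with x hx
    rw [hx]
  rw [this, integral_mul_const, hzp, zero_mul]



/-- An element of `L²(μ^⊗n)` orthogonal to all elementary tensors is zero. -/
lemma eq_zero_of_forall_inner_tensor {n : ℕ} (v : Lp ℝ 2 (Measure.pi fun _ : Fin n => μ))
    (hv : ∀ f : Fin n → Lp ℝ 2 μ, ⟪v, tensor f⟫_ℝ = 0) : v = 0 := by
  have hvi : Integrable (v : (Fin n → X) → ℝ) (Measure.pi fun _ : Fin n => μ) :=
    (Lp.memLp v).integrable one_le_two
  -- step 1: the integral of v over every measurable rectangle vanishes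
  have hrect : ∀ s : Fin n → Set X, (∀ i, MeasurableSet (s i)) →
      ∫ p in univ.pi s, (v : (Fin n → X) → ℝ) p ∂(Measure.pi fun _ : Fin n => μ) = 0 := by
    intro s hs
    have := hv fun i => indicatorConstLp 2 (hs i) (measure_ne_top μ (s i)) (1 : ℝ)
    rw [L2.inner_def] at this
    rw [← this]
    have hae : ∀ᵐ p ∂(Measure.pi fun _ : Fin n => μ), ∀ i,
        (indicatorConstLp 2 (hs i) (measure_ne_top μ (s i)) (1 : ℝ) : X → ℝ) (p i)
          = (s i).indicator (fun _ => (1:ℝ)) (p i) := by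
      rw [eventually_all]
      intro i
      exact ae_eval i indicatorConstLp_coeFn
    rw [← integral_indicator (MeasurableSet.univ_pi hs)]
    apply integral_congr_ae
    filter_upwards [hae, tensor_coeFn
      (fun i => indicatorConstLp 2 (hs i) (measure_ne_top μ (s i)) (1 : ℝ))] with p hp htp
    rw [RCLike.inner_apply, conj_trivial, htp]
    have hprod : ∏ i, (indicatorConstLp 2 (hs i) (measure_ne_top μ (s i)) (1 : ℝ) : X → ℝ) (p i)
        = (univ.pi s).indicator (fun _ => (1:ℝ)) p := by
      rw [Finset.prod_congr rfl fun i _ => hp i]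
      by_cases hmem : p ∈ univ.pi s
      · rw [indicator_of_mem hmem]
        exact Finset.prod_eq_one fun i _ => indicator_of_mem (hmem i (mem_univ i)) _
      · rw [indicator_of_notMem hmem]
        simp only [mem_univ_pi, not_forall] at hmem
        obtain ⟨i, hi⟩ := hmem
        exact Finset.prod_eq_zero (Finset.mem_univ i) (indicator_of_notMem hi _)
    rw [hprod]
    by_cases hmem : p ∈ univ.pi s
    · rw [indicator_of_mem hmem, indicator_of_mem hmem]; ring
    · rw [indicator_of_notMem hmem, indicator_of_notMem hmem]; ring
  -- step 2: extend to all measurable sets via the π-system of rectangles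
  have hall : ∀ S : Set (Fin n → X), MeasurableSet S →
      ∫ p in S, (v : (Fin n → X) → ℝ) p ∂(Measure.pi fun _ : Fin n => μ) = 0 := by
    have huniv : ∫ p, (v : (Fin n → X) → ℝ) p ∂(Measure.pi fun _ : Fin n => μ) = 0 := by
      have := hrect (fun _ => univ) (fun _ => MeasurableSet.univ)
      rwa [Set.pi_univ, setIntegral_univ] at this
    refine MeasurableSpace.induction_on_inter generateFrom_pi.symm isPiSystem_pi ?_ ?_ ?_ ?_
    · simp
    · rintro t ⟨s, hs, rfl⟩
      exact hrect s fun i => hs i (mem_univ i)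
    · intro t ht h
      have := integral_add_compl ht hvi
      rw [h, zero_add] at this
      rw [this, huniv]
    · intro f hdisj hmeas h
      rw [integral_iUnion hmeas hdisj hvi.integrableOn]
      simp [h]
  -- step 3: conclude
  have hz : (v : (Fin n → X) → ℝ) =ᵐ[Measure.pi fun _ : Fin n => μ] 0 :=
    Lp.ae_eq_zero_of_forall_setIntegral_eq_zero v two_ne_zero ENNReal.ofNat_ne_top
      (fun S hS _ => hvi.integrableOn) (fun S hS _ => hall S hS)
  exact Lp.ext (hz.trans (Lp.coeFn_zero ℝ 2 _).symm)



lemma inner_tensor_eq_integral {n : ℕ} (v : Lp ℝ 2 (Measure.pi fun _ : Fin n => μ))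
    (h : Fin n → Lp ℝ 2 μ) :
    ⟪v, tensor h⟫_ℝ = ∫ p, (v : (Fin n → X) → ℝ) p * ∏ i, h i (p i)
      ∂(Measure.pi fun _ : Fin n => μ) := by
  rw [L2.inner_def]
  apply integral_congr_ae
  filter_upwards [tensor_coeFn h] with p hp
  rw [RCLike.inner_apply, conj_trivial, hp, mul_comm]

lemma integrable_mul_tensor {n : ℕ} (v : Lp ℝ 2 (Measure.pi fun _ : Fin n => μ))
    (h : Fin n → Lp ℝ 2 μ) :
    Integrable (fun p => (v : (Fin n → X) → ℝ) p * ∏ i, h i (p i))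
      (Measure.pi fun _ : Fin n => μ) := by
  have h1 := L2.integrable_inner (𝕜 := ℝ) v (tensor h)
  have h2 : Integrable (fun p => (v : (Fin n → X) → ℝ) p
      * (tensor h : (Fin n → X) → ℝ) p) (Measure.pi fun _ : Fin n => μ) := by
    simpa [RCLike.inner_apply, mul_comm] using h1
  exact h2.congr (by filter_upwards [tensor_coeFn h] with p hp; rw [hp])

lemma coeFn_sub_smul_one (a : Lp ℝ 2 μ) (c : ℝ) :
    ((a - c • one μ : Lp ℝ 2 μ) : X → ℝ) =ᵐ[μ] fun x => a x - c := by
  filter_upwards [Lp.coeFn_sub a (c • one μ), Lp.coeFn_smul c (one μ), one_coeFn]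
    with x hx hx2 hx3
  rw [hx, Pi.sub_apply, hx2, Pi.smul_apply, hx3, smul_eq_mul, mul_one]

lemma inner_tensor_expand {n : ℕ} (v : Lp ℝ 2 (Measure.pi fun _ : Fin n => μ))
    (f : Fin n → Lp ℝ 2 μ) :
    ⟪v, tensor f⟫_ℝ = ∑ S : Finset (Fin n),
      (∏ i ∈ Sᶜ, ∫ x, f i x ∂μ) *
        ⟪v, tensor (fun i => if i ∈ S then f i - (∫ x, f i x ∂μ) • one μ else one μ)⟫_ℝ := by
  classical
  set c : Fin n → ℝ := fun i => ∫ x, f i x ∂μ with hc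
  set e : Fin n → Lp ℝ 2 μ := fun i => f i - c i • one μ with he
  set fS : Finset (Fin n) → Fin n → Lp ℝ 2 μ :=
    fun S i => if i ∈ S then e i else one μ with hfS
  have hae : ∀ᵐ p ∂(Measure.pi fun _ : Fin n => μ), ∀ i,
      (e i : X → ℝ) (p i) = f i (p i) - c i ∧ (one μ : X → ℝ) (p i) = 1 := by
    rw [eventually_all]
    intro i
    exact (ae_eval i (coeFn_sub_smul_one (f i) (c i))).and (ae_eval i one_coeFn)
  have key : ∀ᵐ p ∂(Measure.pi fun _ : Fin n => μ),
      (v : (Fin n → X) → ℝ) p * ∏ i, f i (p i)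
        = ∑ S : Finset (Fin n), (∏ i ∈ Sᶜ, c i)
            * ((v : (Fin n → X) → ℝ) p * ∏ i, fS S i (p i)) := by
    filter_upwards [hae] with p hp
    have h1 : ∏ i, f i (p i)
        = ∑ S : Finset (Fin n), (∏ i ∈ S, (e i : X → ℝ) (p i)) * ∏ i ∈ Sᶜ, c i := by
      have h0 : ∀ i ∈ Finset.univ, f i (p i) = (e i : X → ℝ) (p i) + c i :=
        fun i _ => by rw [(hp i).1]; ring
      rw [Finset.prod_congr rfl h0, Finset.prod_add, Finset.powerset_univ]
      exact Finset.sum_congr rfl fun S _ => by rw [← Finset.compl_eq_univ_sdiff]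
    have h2 : ∀ S : Finset (Fin n), ∏ i, (fS S i : X → ℝ) (p i)
        = ∏ i ∈ S, (e i : X → ℝ) (p i) := by
      intro S
      rw [← Finset.prod_mul_prod_compl S (fun i => (fS S i : X → ℝ) (p i))]
      have hS : ∀ i ∈ S, (fS S i : X → ℝ) (p i) = (e i : X → ℝ) (p i) :=
        fun i hi => by simp only [hfS, if_pos hi]
      have hSc : ∀ i ∈ Sᶜ, (fS S i : X → ℝ) (p i) = 1 := fun i hi => by
        simp only [hfS, if_neg (Finset.mem_compl.mp hi)]
        exact (hp i).2
      rw [Finset.prod_congr rfl hS, Finset.prod_congr rfl hSc, Finset.prod_const_one, mul_one]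
    rw [h1, Finset.mul_sum]
    exact Finset.sum_congr rfl fun S _ => by rw [h2 S]; ring
  rw [inner_tensor_eq_integral, integral_congr_ae key, integral_finset_sum _
    (fun S _ => (integrable_mul_tensor v (fS S)).const_mul _)]
  exact Finset.sum_congr rfl fun S _ => by
    rw [integral_const_mul, inner_tensor_eq_integral]



lemma integral_sub_smul_one (a : Lp ℝ 2 μ) (c : ℝ) :
    ∫ x, ((a - c • one μ : Lp ℝ 2 μ) : X → ℝ) x ∂μ = (∫ x, a x ∂μ) - c := by
  have h : ((a - c • one μ : Lp ℝ 2 μ) : X → ℝ) =ᵐ[μ] fun x => a x - c := by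
    filter_upwards [Lp.coeFn_sub a (c • one μ), Lp.coeFn_smul c (one μ), one_coeFn]
      with x hx hx2 hx3
    rw [hx, Pi.sub_apply, hx2, Pi.smul_apply, hx3, smul_eq_mul, mul_one]
  rw [integral_congr_ae h, integral_sub ((Lp.memLp a).integrable one_le_two)
    (integrable_const c), integral_const]
  simp

/-- The closure of the span of elementary tensors of mean-zero functions. -/
noncomputable def M (μ : Measure X) [IsProbabilityMeasure μ] (n : ℕ) :
    Submodule ℝ (Lp ℝ 2 (Measure.pi fun _ : Fin n => μ)) :=
  (Submodule.span ℝ {t | ∃ f : Fin n → Lp ℝ 2 μ,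
    (∀ i, ∫ x, f i x ∂μ = 0) ∧ t = tensor f}).topologicalClosure

lemma tensor_mem_M {n : ℕ} {f : Fin n → Lp ℝ 2 μ} (hf : ∀ i, ∫ x, f i x ∂μ = 0) :
    tensor f ∈ M μ n :=
  Submodule.le_topologicalClosure _ (Submodule.subset_span ⟨f, hf, rfl⟩)

/-- Any element of `M` is orthogonal to a tensor having the constant `1` in some slot. -/
lemma mem_M_inner_eq_zero {n : ℕ} {w : Lp ℝ 2 (Measure.pi fun _ : Fin n => μ)}
    (hw : w ∈ M μ n) (h : Fin n → Lp ℝ 2 μ) (j : Fin n) (hj : h j = one μ) :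
    ⟪w, tensor h⟫_ℝ = 0 := by
  have hker : M μ n ≤ LinearMap.ker ((innerSL ℝ (tensor h) :
      Lp ℝ 2 (Measure.pi fun _ : Fin n => μ) →L[ℝ] ℝ) : _ →ₗ[ℝ] ℝ) := by
    apply Submodule.topologicalClosure_minimal
    · rw [Submodule.span_le]
      rintro t ⟨f, hf, rfl⟩
      simp only [SetLike.mem_coe, LinearMap.mem_ker, ContinuousLinearMap.coe_coe, innerSL_apply_apply]
      rw [real_inner_comm, inner_tensor]
      apply Finset.prod_eq_zero (Finset.mem_univ j)
      rw [hj, L2.inner_def]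
      have : ∫ x, ⟪(f j : X → ℝ) x, (one μ : X → ℝ) x⟫_ℝ ∂μ = ∫ x, (f j : X → ℝ) x ∂μ := by
        apply integral_congr_ae
        filter_upwards [one_coeFn] with x hx
        rw [RCLike.inner_apply, conj_trivial, hx, one_mul]
      rw [this, hf j]
    · exact ContinuousLinearMap.isClosed_ker _
  have := hker hw
  simp only [LinearMap.mem_ker, ContinuousLinearMap.coe_coe, innerSL_apply_apply] at this
  rw [real_inner_comm]
  exact this

/-- The central approximation lemma: an element of `L²(μ^⊗(n+1))` all of whose coordinate slice
integrals vanish lies in the closed span of mean-zero elementary tensors. -/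
lemma mem_M_of_slices {n : ℕ} (g : Lp ℝ 2 (Measure.pi fun _ : Fin (n + 1) => μ))
    (hz : ∀ j : Fin (n + 1), ∀ᵐ p ∂(Measure.pi fun _ : Fin (n + 1) => μ),
      ∫ x, (g : (Fin (n + 1) → X) → ℝ) (Function.update p j x) ∂μ = 0) :
    g ∈ M μ (n + 1) := by
  classical
  haveI : CompleteSpace (M μ (n + 1)) :=
    (Submodule.isClosed_topologicalClosure _).completeSpace_coe
  set m : Lp ℝ 2 (Measure.pi fun _ : Fin (n + 1) => μ) :=
    ((M μ (n + 1)).orthogonalProjectionOnto g : Lp ℝ 2 (Measure.pi fun _ : Fin (n + 1) => μ))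
    with hm
  have hmM : m ∈ M μ (n + 1) := SetLike.coe_mem _
  have horth : g - m ∈ (M μ (n + 1))ᗮ :=
    Submodule.sub_starProjection_mem_orthogonal (K := M μ (n + 1)) g
  have hr : g - m = 0 := by
    apply eq_zero_of_forall_inner_tensor
    intro f
    rw [inner_tensor_expand]
    apply Finset.sum_eq_zero
    intro S _
    rcases eq_or_ne S Finset.univ with rfl | hS
    · -- mean-zero tensor: orthogonal to g - m
      have hmem : tensor (fun i => if i ∈ (Finset.univ : Finset (Fin (n+1))) then
          f i - (∫ x, f i x ∂μ) • one μ else one μ) ∈ M μ (n + 1) := by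
        apply tensor_mem_M
        intro i
        simp only [Finset.mem_univ, if_pos]
        rw [integral_sub_smul_one]; ring
      rw [real_inner_comm, (Submodule.mem_orthogonal _ _).mp horth _ hmem, mul_zero]
    · -- there is a slot containing the constant one
      obtain ⟨j, hj⟩ : ∃ j, j ∉ S := by
        by_contra hcon
        push_neg at hcon
        exact hS (Finset.eq_univ_iff_forall.mpr hcon)
      set fS : Fin (n + 1) → Lp ℝ 2 μ :=
        fun i => if i ∈ S then f i - (∫ x, f i x ∂μ) • one μ else one μ with hfS
      have hfSj : fS j = one μ := by simp only [hfS, if_neg hj]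
      have h1 : ⟪g, tensor fS⟫_ℝ = 0 := inner_eq_zero_of_slice g j (hz j) fS hfSj
      have h2 : ⟪m, tensor fS⟫_ℝ = 0 := mem_M_inner_eq_zero hmM fS j hfSj
      rw [inner_sub_left, h1, h2, sub_zero, mul_zero]
  have : g = m := by rwa [sub_eq_zero] at hr
  rw [this]
  exact hmM

/-- A continuous linear map vanishing on mean-zero elementary tensors vanishes on `M`. -/
lemma clm_eq_zero_on_M {n : ℕ} {E : Type*} [NormedAddCommGroup E] [NormedSpace ℝ E]
    (Φ : Lp ℝ 2 (Measure.pi fun _ : Fin n => μ) →L[ℝ] E)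
    (hΦ : ∀ f : Fin n → Lp ℝ 2 μ, (∀ i, ∫ x, f i x ∂μ = 0) → Φ (tensor f) = 0)
    {g : Lp ℝ 2 (Measure.pi fun _ : Fin n => μ)} (hg : g ∈ M μ n) : Φ g = 0 := by
  have hker : M μ n ≤ LinearMap.ker (Φ : _ →ₗ[ℝ] E) := by
    apply Submodule.topologicalClosure_minimal
    · rw [Submodule.span_le]
      rintro t ⟨f, hf, rfl⟩
      simpa using hΦ f hf
    · exact ContinuousLinearMap.isClosed_ker _
  simpa using hker hg


end PV
/-- With `P₂, P₃, P₅` as in the text: if `P₅` vanishes on `H^{⊗5}`, then `P₃` vanishes on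
`H^{⊗3}`, hence `P₂` vanishes on `H^{⊗2}`; in particular the pairwise independent
self-joining `ν` associated with `P₂` is the product measure. -/
theorem P5_vanishes_implies_joining_trivial
    {X : Type*} [MeasurableSpace X] [StandardBorelSpace X]
    (μ : Measure X) [IsProbabilityMeasure μ]
    (T : X ≃ᵐ X) (hT : MeasurePreserving T μ μ)
    -- ν : a pairwise independent self-joining of order 3
    (ν : Measure (Fin 3 → X)) [IsProbabilityMeasure ν]
    (hνinv : MeasurePreserving (fun x : Fin 3 → X => fun i => T (x i)) ν ν)
    (hνpair : ∀ j : Fin 3,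
      ν.map (fun x : Fin 3 → X => fun i : Fin 2 => x (j.succAbove i))
        = Measure.pi fun _ : Fin 2 => μ)
    -- P₂ : the Markov operator associated with ν
    (P₂ : Lp ℝ 2 (Measure.pi fun _ : Fin 2 => μ) →L[ℝ] Lp ℝ 2 μ)
    (hP₂ : ∀ (A B C : Set X) (hA : MeasurableSet A), MeasurableSet B → MeasurableSet C →
      ∀ g : Lp ℝ 2 (Measure.pi fun _ : Fin 2 => μ),
      ((g : (Fin 2 → X) → ℝ) =ᵐ[Measure.pi fun _ : Fin 2 => μ]
        fun p => B.indicator (fun _ => (1 : ℝ)) (p 0) * C.indicator (fun _ => (1 : ℝ)) (p 1)) →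
      ⟪indicatorConstLp 2 hA (measure_ne_top μ A) (1 : ℝ), P₂ g⟫_ℝ
        = (ν {x : Fin 3 → X | x 0 ∈ A ∧ x 1 ∈ B ∧ x 2 ∈ C}).toReal)
    -- P₃ defined by ⟪P₃(f₁⊗f₂⊗f₃), f₄⟫ = ⟪P₂(f₁⊗f₂), P₂(f₃⊗f₄)⟫
    (P₃ : Lp ℝ 2 (Measure.pi fun _ : Fin 3 => μ) →L[ℝ] Lp ℝ 2 μ)
    (hP₃ : ∀ (f : Fin 4 → Lp ℝ 2 μ)
      (g₁₂ g₃₄ : Lp ℝ 2 (Measure.pi fun _ : Fin 2 => μ))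
      (g : Lp ℝ 2 (Measure.pi fun _ : Fin 3 => μ)),
      ((g₁₂ : (Fin 2 → X) → ℝ) =ᵐ[Measure.pi fun _ : Fin 2 => μ]
        fun p => f 0 (p 0) * f 1 (p 1)) →
      ((g₃₄ : (Fin 2 → X) → ℝ) =ᵐ[Measure.pi fun _ : Fin 2 => μ]
        fun p => f 2 (p 0) * f 3 (p 1)) →
      ((g : (Fin 3 → X) → ℝ) =ᵐ[Measure.pi fun _ : Fin 3 => μ]
        fun p => f 0 (p 0) * f 1 (p 1) * f 2 (p 2)) →
      ⟪P₃ g, f 3⟫_ℝ = ⟪P₂ g₁₂, P₂ g₃₄⟫_ℝ)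
    -- P₅ defined by ⟪P₅(f₁⊗⋯⊗f₅), f₆⟫ = ⟪P₃(f₁⊗f₂⊗f₃), P₃(f₄⊗f₅⊗f₆)⟫
    (P₅ : Lp ℝ 2 (Measure.pi fun _ : Fin 5 => μ) →L[ℝ] Lp ℝ 2 μ)
    (hP₅ : ∀ (f : Fin 6 → Lp ℝ 2 μ)
      (g₁₂₃ g₄₅₆ : Lp ℝ 2 (Measure.pi fun _ : Fin 3 => μ))
      (g : Lp ℝ 2 (Measure.pi fun _ : Fin 5 => μ)),
      ((g₁₂₃ : (Fin 3 → X) → ℝ) =ᵐ[Measure.pi fun _ : Fin 3 => μ]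
        fun p => f 0 (p 0) * f 1 (p 1) * f 2 (p 2)) →
      ((g₄₅₆ : (Fin 3 → X) → ℝ) =ᵐ[Measure.pi fun _ : Fin 3 => μ]
        fun p => f 3 (p 0) * f 4 (p 1) * f 5 (p 2)) →
      ((g : (Fin 5 → X) → ℝ) =ᵐ[Measure.pi fun _ : Fin 5 => μ]
        fun p => f 0 (p 0) * f 1 (p 1) * f 2 (p 2) * f 3 (p 3) * f 4 (p 4)) →
      ⟪P₅ g, f 5⟫_ℝ = ⟪P₃ g₁₂₃, P₃ g₄₅₆⟫_ℝ)
    -- hypothesis: P₅ vanishes on H^{⊗5}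
    (hvanish : ∀ g : Lp ℝ 2 (Measure.pi fun _ : Fin 5 => μ),
      (∀ j : Fin 5, ∀ᵐ p ∂(Measure.pi fun _ : Fin 5 => μ),
        ∫ x, (g : (Fin 5 → X) → ℝ) (Function.update p j x) ∂μ = 0) →
      P₅ g = 0) :
    (∀ g : Lp ℝ 2 (Measure.pi fun _ : Fin 3 => μ),
      (∀ j : Fin 3, ∀ᵐ p ∂(Measure.pi fun _ : Fin 3 => μ),
        ∫ x, (g : (Fin 3 → X) → ℝ) (Function.update p j x) ∂μ = 0) →
      P₃ g = 0) ∧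
    (∀ g : Lp ℝ 2 (Measure.pi fun _ : Fin 2 => μ),
      (∀ j : Fin 2, ∀ᵐ p ∂(Measure.pi fun _ : Fin 2 => μ),
        ∫ x, (g : (Fin 2 → X) → ℝ) (Function.update p j x) ∂μ = 0) →
      P₂ g = 0) ∧
    ν = Measure.pi fun _ : Fin 3 => μ := by
  classical
  -- useful instances
  -- Part 1 : P₃ vanishes on H^{⊗3}
  have part1 : ∀ g : Lp ℝ 2 (Measure.pi fun _ : Fin 3 => μ),
      (∀ j : Fin 3, ∀ᵐ p ∂(Measure.pi fun _ : Fin 3 => μ),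
        ∫ x, (g : (Fin 3 → X) → ℝ) (Function.update p j x) ∂μ = 0) →
      P₃ g = 0 := by
    intro g hzg
    refine PV.clm_eq_zero_on_M P₃ ?_ (PV.mem_M_of_slices (n := 2) g hzg)
    intro f hf
    have h5 : ∀ j : Fin 5, ∀ᵐ p ∂(Measure.pi fun _ : Fin 5 => μ),
        ∫ x, (PV.tensor ![f 0, f 1, f 2, f 0, f 1] : (Fin 5 → X) → ℝ)
          (Function.update p j x) ∂μ = 0 := by
      intro j
      apply PV.slice_tensor (n := 4)
      fin_cases j <;> simp [hf 0, hf 1, hf 2]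
    have hP5z : P₅ (PV.tensor ![f 0, f 1, f 2, f 0, f 1]) = 0 := hvanish _ h5
    have hcoe3 : (PV.tensor f : (Fin 3 → X) → ℝ) =ᵐ[Measure.pi fun _ : Fin 3 => μ]
        fun p => f 0 (p 0) * f 1 (p 1) * f 2 (p 2) := by
      filter_upwards [PV.tensor_coeFn f] with p hp
      rw [hp, Fin.prod_univ_three]
    have hcoe5 : (PV.tensor ![f 0, f 1, f 2, f 0, f 1] : (Fin 5 → X) → ℝ)
        =ᵐ[Measure.pi fun _ : Fin 5 => μ]
        fun p => f 0 (p 0) * f 1 (p 1) * f 2 (p 2) * f 0 (p 3) * f 1 (p 4) := by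
      filter_upwards [PV.tensor_coeFn ![f 0, f 1, f 2, f 0, f 1]] with p hp
      rw [hp, Fin.prod_univ_five]
      simp [Matrix.cons_val_zero, Matrix.cons_val_one]
    have hkey := hP₅ ![f 0, f 1, f 2, f 0, f 1, f 2] (PV.tensor f) (PV.tensor f)
      (PV.tensor ![f 0, f 1, f 2, f 0, f 1])
      (by simpa using hcoe3) (by simpa using hcoe3) (by simpa using hcoe5)
    rw [hP5z, inner_zero_left] at hkey
    exact inner_self_eq_zero.mp hkey.symm
  -- Part 2 : P₂ vanishes on H^{⊗2}
  have part2 : ∀ g : Lp ℝ 2 (Measure.pi fun _ : Fin 2 => μ),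
      (∀ j : Fin 2, ∀ᵐ p ∂(Measure.pi fun _ : Fin 2 => μ),
        ∫ x, (g : (Fin 2 → X) → ℝ) (Function.update p j x) ∂μ = 0) →
      P₂ g = 0 := by
    intro g hzg
    refine PV.clm_eq_zero_on_M P₂ ?_ (PV.mem_M_of_slices (n := 1) g hzg)
    intro f hf
    have h3 : ∀ j : Fin 3, ∀ᵐ p ∂(Measure.pi fun _ : Fin 3 => μ),
        ∫ x, (PV.tensor ![f 0, f 1, f 0] : (Fin 3 → X) → ℝ)
          (Function.update p j x) ∂μ = 0 := by
      intro j
      apply PV.slice_tensor (n := 2)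
      fin_cases j <;> simp [hf 0, hf 1]
    have hP3z : P₃ (PV.tensor ![f 0, f 1, f 0]) = 0 := part1 _ h3
    have hcoe2 : (PV.tensor f : (Fin 2 → X) → ℝ) =ᵐ[Measure.pi fun _ : Fin 2 => μ]
        fun p => f 0 (p 0) * f 1 (p 1) := by
      filter_upwards [PV.tensor_coeFn f] with p hp
      rw [hp, Fin.prod_univ_two]
    have hcoe3 : (PV.tensor ![f 0, f 1, f 0] : (Fin 3 → X) → ℝ)
        =ᵐ[Measure.pi fun _ : Fin 3 => μ]
        fun p => f 0 (p 0) * f 1 (p 1) * f 0 (p 2) := by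
      filter_upwards [PV.tensor_coeFn ![f 0, f 1, f 0]] with p hp
      rw [hp, Fin.prod_univ_three]
      simp [Matrix.cons_val_zero, Matrix.cons_val_one]
    have hkey := hP₃ ![f 0, f 1, f 0, f 1] (PV.tensor f) (PV.tensor f)
      (PV.tensor ![f 0, f 1, f 0])
      (by simpa using hcoe2) (by simpa using hcoe2) (by simpa using hcoe3)
    rw [hP3z, inner_zero_left] at hkey
    exact inner_self_eq_zero.mp hkey.symm
  -- Part 3 : ν is the product measure
  have hmarg : ∀ (j : Fin 3) (A B : Set X), MeasurableSet A → MeasurableSet B →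
      ν {x : Fin 3 → X | x (j.succAbove 0) ∈ A ∧ x (j.succAbove 1) ∈ B} = μ A * μ B := by
    intro j A B hA hB
    have hmeas : Measurable (fun x : Fin 3 → X => fun i : Fin 2 => x (j.succAbove i)) :=
      measurable_pi_lambda _ fun i => measurable_pi_apply _
    have hset : MeasurableSet {y : Fin 2 → X | y 0 ∈ A ∧ y 1 ∈ B} :=
      (measurable_pi_apply 0 hA).inter (measurable_pi_apply 1 hB)
    have hpre : {x : Fin 3 → X | x (j.succAbove 0) ∈ A ∧ x (j.succAbove 1) ∈ B}
        = (fun x : Fin 3 → X => fun i : Fin 2 => x (j.succAbove i)) ⁻¹'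
          {y : Fin 2 → X | y 0 ∈ A ∧ y 1 ∈ B} := rfl
    rw [hpre, ← Measure.map_apply hmeas hset, hνpair j]
    have h2 : {y : Fin 2 → X | y 0 ∈ A ∧ y 1 ∈ B} = univ.pi ![A, B] := by
      ext y
      simp [Set.mem_univ_pi, Fin.forall_fin_two]
    rw [h2, Measure.pi_pi]
    simp [Fin.prod_univ_two]
  have hAB : ∀ (A B : Set X), MeasurableSet A → MeasurableSet B →
      ν {x : Fin 3 → X | x 0 ∈ A ∧ x 1 ∈ B ∧ x 2 ∈ univ} = μ A * μ B := by
    intro A B hA hB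
    have := hmarg 2 A B hA hB
    have e0 : (2 : Fin 3).succAbove 0 = 0 := rfl
    have e1 : (2 : Fin 3).succAbove 1 = 1 := rfl
    rw [e0, e1] at this
    rw [← this]
    congr 1
    ext x
    simp
  have hAC : ∀ (A C : Set X), MeasurableSet A → MeasurableSet C →
      ν {x : Fin 3 → X | x 0 ∈ A ∧ x 1 ∈ univ ∧ x 2 ∈ C} = μ A * μ C := by
    intro A C hA hC
    have := hmarg 1 A C hA hC
    have e0 : (1 : Fin 3).succAbove 0 = 0 := rfl
    have e1 : (1 : Fin 3).succAbove 1 = 2 := rfl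
    rw [e0, e1] at this
    rw [← this]
    congr 1
    ext x
    simp
  have hIint : ∀ (B : Set X) (hB : MeasurableSet B),
      ∫ x, (indicatorConstLp 2 hB (measure_ne_top μ B) (1 : ℝ) : X → ℝ) x ∂μ
        = (μ B).toReal := by
    intro B hB
    rw [integral_indicatorConstLp hB (measure_ne_top μ B) 1, smul_eq_mul, mul_one, measureReal_def]
  have htens : ∀ u v : Lp ℝ 2 μ, (PV.tensor ![u, v] : (Fin 2 → X) → ℝ)
      =ᵐ[Measure.pi fun _ : Fin 2 => μ] fun p => u (p 0) * v (p 1) := by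
    intro u v
    filter_upwards [PV.tensor_coeFn ![u, v]] with p hp
    rw [hp, Fin.prod_univ_two]
    simp
  have hprod : ∀ (A B C : Set X), MeasurableSet A → MeasurableSet B → MeasurableSet C →
      (ν {x : Fin 3 → X | x 0 ∈ A ∧ x 1 ∈ B ∧ x 2 ∈ C}).toReal
        = (μ A).toReal * (μ B).toReal * (μ C).toReal := by
    intro A B C hA hB hC
    set β := (μ B).toReal with hβ
    set γ := (μ C).toReal with hγ
    set IB := indicatorConstLp 2 hB (measure_ne_top μ B) (1 : ℝ) with hIB
    set IC := indicatorConstLp 2 hC (measure_ne_top μ C) (1 : ℝ) with hIC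
    set b0 := IB - β • PV.one μ with hb0
    set c0 := IC - γ • PV.one μ with hc0
    have hb0coe : (b0 : X → ℝ) =ᵐ[μ] fun x => B.indicator (fun _ => (1:ℝ)) x - β := by
      filter_upwards [PV.coeFn_sub_smul_one IB β, indicatorConstLp_coeFn (p := 2) (μ := μ)
        (hs := hB) (hμs := measure_ne_top μ B) (c := (1:ℝ))] with x h1 h2
      rw [h1, h2]
    have hc0coe : (c0 : X → ℝ) =ᵐ[μ] fun x => C.indicator (fun _ => (1:ℝ)) x - γ := by
      filter_upwards [PV.coeFn_sub_smul_one IC γ, indicatorConstLp_coeFn (p := 2) (μ := μ)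
        (hs := hC) (hμs := measure_ne_top μ C) (c := (1:ℝ))] with x h1 h2
      rw [h1, h2]
    -- coordinatewise a.e. facts
    have h0B := PV.ae_eval (μ := μ) (n := 2) 0 (indicatorConstLp_coeFn (p := 2) (μ := μ)
      (hs := hB) (hμs := measure_ne_top μ B) (c := (1:ℝ)))
    have h1C := PV.ae_eval (μ := μ) (n := 2) 1 (indicatorConstLp_coeFn (p := 2) (μ := μ)
      (hs := hC) (hμs := measure_ne_top μ C) (c := (1:ℝ)))
    have h0one := PV.ae_eval (μ := μ) (n := 2) 0 (PV.one_coeFn (μ := μ))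
    have h1one := PV.ae_eval (μ := μ) (n := 2) 1 (PV.one_coeFn (μ := μ))
    have h0b := PV.ae_eval (μ := μ) (n := 2) 0 hb0coe
    have h1c := PV.ae_eval (μ := μ) (n := 2) 1 hc0coe
    -- decomposition in L²
    have hdec : PV.tensor ![IB, IC] = PV.tensor ![b0, c0] + γ • PV.tensor ![IB, PV.one μ]
        + β • PV.tensor ![PV.one μ, IC]
        - (β * γ) • PV.tensor ![PV.one μ, PV.one μ] := by
      apply Lp.ext
      filter_upwards [htens IB IC, htens b0 c0, htens IB (PV.one μ), htens (PV.one μ) IC,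
        htens (PV.one μ) (PV.one μ),
        Lp.coeFn_sub (PV.tensor ![b0, c0] + γ • PV.tensor ![IB, PV.one μ]
          + β • PV.tensor ![PV.one μ, IC]) ((β * γ) • PV.tensor ![PV.one μ, PV.one μ]),
        Lp.coeFn_add (PV.tensor ![b0, c0] + γ • PV.tensor ![IB, PV.one μ])
          (β • PV.tensor ![PV.one μ, IC]),
        Lp.coeFn_add (PV.tensor ![b0, c0]) (γ • PV.tensor ![IB, PV.one μ]),
        Lp.coeFn_smul γ (PV.tensor ![IB, PV.one μ]),
        Lp.coeFn_smul β (PV.tensor ![PV.one μ, IC]),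
        Lp.coeFn_smul (β * γ) (PV.tensor ![PV.one μ, PV.one μ]),
        h0B, h1C, h0one, h1one, h0b, h1c]
        with p t1 t2 t3 t4 t5 e1 e2 e3 e4 e5 e6 k1 k2 k3 k4 k5 k6
      rw [t1, e1, Pi.sub_apply, e2, Pi.add_apply, e3, Pi.add_apply, e4,
        Pi.smul_apply, e5, Pi.smul_apply, e6, Pi.smul_apply, t2, t3, t4, t5,
        k1, k2, k3, k4, k5, k6, smul_eq_mul, smul_eq_mul, smul_eq_mul]
      ring
    -- the four inner products
    have hgBC := hP₂ A B C hA hB hC (PV.tensor ![IB, IC]) (by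
      filter_upwards [htens IB IC, h0B, h1C] with p hp k1 k2
      rw [hp, k1, k2])
    have hT1 := hP₂ A B univ hA hB MeasurableSet.univ (PV.tensor ![IB, PV.one μ]) (by
      filter_upwards [htens IB (PV.one μ), h0B, h1one] with p hp k1 k2
      rw [hp, k1, k2, Set.indicator_univ])
    have hT2 := hP₂ A univ C hA MeasurableSet.univ hC (PV.tensor ![PV.one μ, IC]) (by
      filter_upwards [htens (PV.one μ) IC, h0one, h1C] with p hp k1 k2
      rw [hp, k1, k2, Set.indicator_univ])
    have hT3 := hP₂ A univ univ hA MeasurableSet.univ MeasurableSet.univ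
      (PV.tensor ![PV.one μ, PV.one μ]) (by
      filter_upwards [htens (PV.one μ) (PV.one μ), h0one, h1one] with p hp k1 k2
      rw [hp, k1, k2, Set.indicator_univ])
    have hT0 : P₂ (PV.tensor ![b0, c0]) = 0 := by
      apply part2
      intro j
      have hib : ∫ x, (b0 : X → ℝ) x ∂μ = 0 := by
        rw [hb0, PV.integral_sub_smul_one, hIint B hB]
        ring
      have hic : ∫ x, (c0 : X → ℝ) x ∂μ = 0 := by
        rw [hc0, PV.integral_sub_smul_one, hIint C hC]
        ring
      apply PV.slice_tensor (n := 1)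
      fin_cases j <;> simp [hib, hic]
    have hν1 := hAB A B hA hB
    have hν2 := hAC A C hA hC
    have hν3 : ν {x : Fin 3 → X | x 0 ∈ A ∧ x 1 ∈ univ ∧ x 2 ∈ univ} = μ A := by
      rw [hAB A univ hA MeasurableSet.univ, measure_univ, mul_one]
    calc (ν {x : Fin 3 → X | x 0 ∈ A ∧ x 1 ∈ B ∧ x 2 ∈ C}).toReal
        = ⟪indicatorConstLp 2 hA (measure_ne_top μ A) (1 : ℝ),
            P₂ (PV.tensor ![IB, IC])⟫_ℝ := hgBC.symm
      _ = (μ A).toReal * (μ B).toReal * (μ C).toReal := by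
          rw [hdec]
          simp only [map_sub, map_add, _root_.map_smul, hT0, zero_add,
            inner_sub_right, inner_add_right, real_inner_smul_right]
          rw [hT1, hT2, hT3, hν1, hν2, hν3, ENNReal.toReal_mul, ENNReal.toReal_mul]
          ring
  have hνeq : ν = Measure.pi fun _ : Fin 3 => μ := by
    refine (Measure.pi_eq (μ := fun _ : Fin 3 => μ) fun s hs => ?_).symm
    have hset : univ.pi s = {x : Fin 3 → X | x 0 ∈ s 0 ∧ x 1 ∈ s 1 ∧ x 2 ∈ s 2} := by
      ext x
      constructor
      · intro h
        exact ⟨h 0 (mem_univ 0), h 1 (mem_univ 1), h 2 (mem_univ 2)⟩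
      · rintro ⟨h0, h1, h2⟩ i _
        fin_cases i <;> assumption
    rw [hset, Fin.prod_univ_three]
    refine (ENNReal.toReal_eq_toReal_iff' (measure_ne_top _ _) ?_).mp ?_
    · exact ENNReal.mul_ne_top (ENNReal.mul_ne_top (measure_ne_top _ _)
        (measure_ne_top _ _)) (measure_ne_top _ _)
    · rw [hprod (s 0) (s 1) (s 2) (hs 0) (hs 1) (hs 2), ENNReal.toReal_mul,
        ENNReal.toReal_mul]
  exact ⟨part1, part2, hνeq⟩
end

section
/- If T is a mixing automorphism, then for all measurable sets A,B,C and every ε > 0, the quantity dev(h) = |Der(ε,A,B,C,h)|/h is bounded in h, where Der(ε,A,B,C,h) is the set of pairs (z,w) ∈ Q(ε,h) with |μ(A ∩ T^z B ∩ T^w C) − μ(A)μ(B)μ(C)| > ε and Q(ε,h) = {(z,w) ∈ [0,h]² ∩ ℤ² : |z|, |w|, |z−w| > εh}. -/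
/-!
Fix a row `w ≥ W₀`, where mixing gives `μ(A ∩ T^w C) ≈ μ(A)μ(C)`. With `W = A ∩ T^w C`, every
`(z, w) ∈ Der` then forces `|⟪1_W, 1_{T^z B} - μ(B)⟫| ≥ ε/2` in `L²(μ)`. Mixing of `B` with itself
makes the vectors `1_{T^z B} - μ(B)` almost orthogonal once `z` and `z'` are far apart, so by
Cauchy–Schwarz applied to their sum a vector of norm at most `1` correlates with only boundedly many
of them. Each row `w ≥ W₀` of `Der` is therefore bounded, the `W₀` remaining rows have at most
`h + 1` points each, and `|Der| = O(h)`.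
-/

open MeasureTheory Filter

/-- The set `Q(ε,h)` of pairs `(z,w) ∈ [0,h]²` with `|z|, |w|, |z−w| > εh`. -/
def Qset (ε : ℝ) (h : ℕ) : Set (ℕ × ℕ) :=
  {p : ℕ × ℕ | p.1 ≤ h ∧ p.2 ≤ h ∧ (p.1 : ℝ) > ε * h ∧ (p.2 : ℝ) > ε * h ∧
    |(p.1 : ℝ) - (p.2 : ℝ)| > ε * h}

/-- The set of deviations from double mixing in `Q(ε,h)`. -/
def Der {X : Type*} [MeasurableSpace X] (μ : Measure X) (T : X → X)
    (ε : ℝ) (A B C : Set X) (h : ℕ) : Set (ℕ × ℕ) :=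
  {p ∈ Qset ε h |
    |(μ (A ∩ T^[p.1] '' B ∩ T^[p.2] '' C)).toReal
      - (μ A).toReal * (μ B).toReal * (μ C).toReal| > ε}

open Finset
open scoped RealInnerProductSpace

section AlmostOrthogonal

variable {E : Type*} [NormedAddCommGroup E] [InnerProductSpace ℝ E] {v : ℕ → E} {D : ℕ}

lemma real_inner_le_add_of_far (hv : ∀ z, ‖v z‖ ≤ 1) {δ : ℝ} (hδ : 0 ≤ δ)
    (hfar : ∀ z z', z + D ≤ z' → ⟪v z, v z'⟫ ≤ δ) (z z' : ℕ) :
    ⟪v z, v z'⟫ ≤ δ + if z' ∈ Icc (z - D) (z + D) then 1 else 0 := by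
  split_ifs with hnear
  · calc ⟪v z, v z'⟫ ≤ ‖v z‖ * ‖v z'‖ := real_inner_le_norm _ _
      _ ≤ 1 := mul_le_one₀ (hv z) (norm_nonneg _) (hv z')
      _ ≤ δ + 1 := by linarith
  · rw [mem_Icc] at hnear
    rcases (by omega : z + D ≤ z' ∨ z' + D ≤ z) with hzz' | hz'z
    · simpa using hfar z z' hzz'
    · simpa [real_inner_comm] using hfar z' z hz'z

lemma norm_sum_sq_le_of_far (hv : ∀ z, ‖v z‖ ≤ 1) {δ : ℝ} (hδ : 0 ≤ δ)
    (hfar : ∀ z z', z + D ≤ z' → ⟪v z, v z'⟫ ≤ δ) (Z : Finset ℕ) :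
    ‖∑ z ∈ Z, v z‖ ^ 2 ≤ #Z * (#Z * δ + (2 * D + 1)) := by
  have hrow : ∀ z, ∑ z' ∈ Z, ⟪v z, v z'⟫ ≤ #Z * δ + (2 * D + 1) := by
    intro z
    have hnear : (#{z' ∈ Z | z' ∈ Icc (z - D) (z + D)} : ℝ) ≤ 2 * D + 1 := by
      have hsub : #{z' ∈ Z | z' ∈ Icc (z - D) (z + D)} ≤ #(Icc (z - D) (z + D)) :=
        card_le_card fun _ hz' ↦ (mem_filter.1 hz').2
      rw [Nat.card_Icc] at hsub
      exact_mod_cast (by omega : #{z' ∈ Z | z' ∈ Icc (z - D) (z + D)} ≤ 2 * D + 1)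
    calc ∑ z' ∈ Z, ⟪v z, v z'⟫
        ≤ ∑ z' ∈ Z, (δ + if z' ∈ Icc (z - D) (z + D) then 1 else 0) :=
          sum_le_sum fun z' _ ↦ real_inner_le_add_of_far hv hδ hfar z z'
      _ ≤ #Z * δ + (2 * D + 1) := by
          rw [sum_add_distrib, sum_const, nsmul_eq_mul, sum_boole]
          linarith
  calc ‖∑ z ∈ Z, v z‖ ^ 2 = ∑ z ∈ Z, ∑ z' ∈ Z, ⟪v z, v z'⟫ := by
        rw [← real_inner_self_eq_norm_sq, sum_inner]
        simp_rw [inner_sum]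
    _ ≤ ∑ z ∈ Z, (#Z * δ + (2 * D + 1)) := sum_le_sum fun z _ ↦ hrow z
    _ = #Z * (#Z * δ + (2 * D + 1)) := by rw [sum_const, nsmul_eq_mul]

lemma card_le_of_le_real_inner (hv : ∀ z, ‖v z‖ ≤ 1) {u : E} (hu : ‖u‖ ≤ 1) {η : ℝ} (hη : 0 < η)
    (hfar : ∀ z z', z + D ≤ z' → ⟪v z, v z'⟫ ≤ η ^ 2 / 2) {Z : Finset ℕ}
    (hZ : ∀ z ∈ Z, η ≤ ⟪u, v z⟫) : (#Z : ℝ) ≤ 2 * (2 * D + 1) / η ^ 2 := by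
  have hlower : #Z * η ≤ ‖∑ z ∈ Z, v z‖ :=
    calc #Z * η = ∑ _z ∈ Z, η := by rw [sum_const, nsmul_eq_mul]
      _ ≤ ∑ z ∈ Z, ⟪u, v z⟫ := sum_le_sum hZ
      _ = ⟪u, ∑ z ∈ Z, v z⟫ := (inner_sum ..).symm
      _ ≤ ‖u‖ * ‖∑ z ∈ Z, v z‖ := real_inner_le_norm _ _
      _ ≤ ‖∑ z ∈ Z, v z‖ := mul_le_of_le_one_left (norm_nonneg _) hu
  have hupper := norm_sum_sq_le_of_far hv (by positivity) hfar Z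
  have hsq : (#Z * η) ^ 2 ≤ #Z * (#Z * (η ^ 2 / 2) + (2 * D + 1)) :=
    (pow_le_pow_left₀ (by positivity) hlower 2).trans hupper
  rw [le_div_iff₀ (by positivity)]
  rcases (Nat.cast_nonneg #Z : (0 : ℝ) ≤ #Z).eq_or_lt with hZ0 | hZpos
  · rw [← hZ0, zero_mul]; positivity
  · nlinarith

lemma card_le_of_le_abs_real_inner (hv : ∀ z, ‖v z‖ ≤ 1) {u : E} (hu : ‖u‖ ≤ 1) {η : ℝ}
    (hη : 0 < η) (hfar : ∀ z z', z + D ≤ z' → ⟪v z, v z'⟫ ≤ η ^ 2 / 2) {Z : Finset ℕ}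
    (hZ : ∀ z ∈ Z, η ≤ |⟪u, v z⟫|) : (#Z : ℝ) ≤ 4 * (2 * D + 1) / η ^ 2 := by
  have hpos : (#{z ∈ Z | 0 ≤ ⟪u, v z⟫} : ℝ) ≤ 2 * (2 * D + 1) / η ^ 2 :=
    card_le_of_le_real_inner hv hu hη hfar fun z hz ↦ by
      obtain ⟨hzZ, hsign⟩ := mem_filter.1 hz
      simpa [abs_of_nonneg hsign] using hZ z hzZ
  have hneg : (#{z ∈ Z | ¬0 ≤ ⟪u, v z⟫} : ℝ) ≤ 2 * (2 * D + 1) / η ^ 2 :=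
    card_le_of_le_real_inner hv (u := -u) (by rwa [norm_neg]) hη hfar fun z hz ↦ by
      obtain ⟨hzZ, hsign⟩ := mem_filter.1 hz
      simpa [abs_of_neg (not_le.1 hsign), inner_neg_left] using hZ z hzZ
  rw [← card_filter_add_card_filter_not (fun z ↦ 0 ≤ ⟪u, v z⟫)]
  push_cast
  linarith [show 4 * (2 * D + 1) / η ^ 2 = 2 * (2 * (2 * D + 1) / η ^ 2) by ring]

end AlmostOrthogonal

namespace MeasurableEquiv

variable {X : Type*} [MeasurableSpace X] {μ : Measure X} (T : X ≃ᵐ X)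

lemma iterate_image_eq_preimage (n : ℕ) (s : Set X) :
    (⇑T)^[n] '' s = (⇑T.symm)^[n] ⁻¹' s :=
  congrFun (Set.image_eq_preimage_of_inverse (T.left_inv.iterate n) (T.right_inv.iterate n)) s

lemma measurableSet_iterate_image {s : Set X} (hs : MeasurableSet s) (n : ℕ) :
    MeasurableSet ((⇑T)^[n] '' s) := by
  rw [iterate_image_eq_preimage]
  exact T.symm.measurable.iterate n hs

variable {T}

lemma measure_iterate_image (hT : MeasurePreserving T μ μ) {s : Set X} (hs : MeasurableSet s)
    (n : ℕ) : μ ((⇑T)^[n] '' s) = μ s := by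
  rw [iterate_image_eq_preimage]
  exact ((hT.symm T).iterate n).measure_preimage hs.nullMeasurableSet

lemma measure_iterate_image_inter_iterate_image (hT : MeasurePreserving T μ μ) {s t : Set X}
    (hs : MeasurableSet s) (ht : MeasurableSet t) {m n : ℕ} (hmn : m ≤ n) :
    μ ((⇑T)^[m] '' s ∩ (⇑T)^[n] '' t) = μ (s ∩ (⇑T)^[n - m] '' t) := by
  have hshift : (⇑T)^[n] '' t = (⇑T)^[m] '' ((⇑T)^[n - m] '' t) := by
    rw [← Set.image_comp, ← Function.iterate_add, Nat.add_sub_cancel' hmn]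
  rw [hshift, ← Set.image_inter (T.injective.iterate m),
    measure_iterate_image hT (hs.inter (T.measurableSet_iterate_image ht _))]

end MeasurableEquiv

lemma exists_forall_ge_abs_measureReal_sub_mul_lt {X : Type*} [MeasurableSpace X]
    {μ : Measure X} [IsFiniteMeasure μ] {g : ℕ → Set X} {s t : Set X}
    (hg : Tendsto (fun m ↦ μ (g m)) atTop (nhds (μ s * μ t))) {η : ℝ} (hη : 0 < η) :
    ∃ N, ∀ m ≥ N, |μ.real (g m) - μ.real s * μ.real t| < η := by
  have hreal := (ENNReal.tendsto_toReal (by finiteness)).comp hg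
  rw [ENNReal.toReal_mul] at hreal
  simpa [Real.dist_eq, measureReal_def] using Metric.tendsto_atTop.1 hreal η hη

section CenteredIndicator

variable {X : Type*} [MeasurableSpace X] (μ : Measure X) [IsProbabilityMeasure μ]

noncomputable def centeredIndicatorLp {s : Set X} (hs : MeasurableSet s) (c : ℝ) : Lp ℝ 2 μ :=
  indicatorConstLp 2 hs (measure_ne_top μ s) 1 -
    c • indicatorConstLp 2 MeasurableSet.univ (measure_ne_top μ _) 1

variable {μ}

lemma real_inner_centeredIndicatorLp {s t : Set X} (hs : MeasurableSet s) (ht : MeasurableSet t)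
    (a b : ℝ) :
    ⟪centeredIndicatorLp μ hs a, centeredIndicatorLp μ ht b⟫ =
      μ.real (s ∩ t) - a * μ.real t - b * μ.real s + a * b := by
  simp only [centeredIndicatorLp, inner_sub_left, inner_sub_right, real_inner_smul_left,
    real_inner_smul_right, L2.real_inner_indicatorConstLp_one_indicatorConstLp_one,
    Set.inter_univ, Set.univ_inter, probReal_univ]
  ring

lemma norm_centeredIndicatorLp_le_one {s : Set X} (hs : MeasurableSet s) {c : ℝ} (hc₀ : 0 ≤ c)
    (hc₁ : c ≤ 1) : ‖centeredIndicatorLp μ hs c‖ ≤ 1 := by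
  have hsq : ‖centeredIndicatorLp μ hs c‖ ^ 2 ≤ 1 := by
    rw [← real_inner_self_eq_norm_sq, real_inner_centeredIndicatorLp, Set.inter_self]
    have : μ.real s ≤ 1 := measureReal_le_one
    nlinarith [measureReal_nonneg (μ := μ) (s := s)]
  exact (sq_le_one_iff₀ (norm_nonneg _)).1 hsq

open MeasurableEquiv in
lemma card_le_of_le_abs_measureReal_inter_iterate_image_sub {T : X ≃ᵐ X}
    (hT : MeasurePreserving T μ μ) {B W : Set X} (hB : MeasurableSet B) (hW : MeasurableSet W)
    {η : ℝ} (hη : 0 < η) {D : ℕ}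
    (hD : ∀ d ≥ D, μ.real (B ∩ (⇑T)^[d] '' B) ≤ μ.real B ^ 2 + η ^ 2 / 2) {Z : Finset ℕ}
    (hZ : ∀ z ∈ Z, η ≤ |μ.real (W ∩ (⇑T)^[z] '' B) - μ.real B * μ.real W|) :
    (#Z : ℝ) ≤ 4 * (2 * D + 1) / η ^ 2 := by
  set b := μ.real B
  have hb : ∀ z, μ.real ((⇑T)^[z] '' B) = b := fun z ↦ by
    simp only [measureReal_def, measure_iterate_image hT hB, b]
  refine card_le_of_le_abs_real_inner
    (v := fun z ↦ centeredIndicatorLp μ (T.measurableSet_iterate_image hB z) b)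
    (u := centeredIndicatorLp μ hW 0)
    (fun z ↦ norm_centeredIndicatorLp_le_one _ measureReal_nonneg measureReal_le_one)
    (norm_centeredIndicatorLp_le_one _ le_rfl zero_le_one) hη (fun z z' hzz' ↦ ?_) fun z hz ↦ ?_
  · have hfar := hD (z' - z) (by omega)
    rw [real_inner_centeredIndicatorLp, hb, hb, measureReal_def,
      measure_iterate_image_inter_iterate_image hT hB hB (by omega), ← measureReal_def]
    linarith
  · simpa [real_inner_centeredIndicatorLp, hb] using hZ z hz

end CenteredIndicator

lemma card_le_of_card_fiber_le {s : Finset (ℕ × ℕ)} {n W₀ : ℕ} {M : ℝ}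
    (hs : ∀ p ∈ s, p.1 < n ∧ p.2 < n) (hfib : ∀ w ≥ W₀, (#{p ∈ s | p.2 = w} : ℝ) ≤ M) :
    (#s : ℝ) ≤ n * (W₀ + M) := by
  have hlow : #{p ∈ s | p.2 < W₀} ≤ n * W₀ :=
    calc #{p ∈ s | p.2 < W₀} ≤ #(range n ×ˢ range W₀) := card_le_card fun p hp ↦ by
          obtain ⟨hps, hpW⟩ := mem_filter.1 hp
          simpa [mem_product] using And.intro (hs p hps).1 hpW
      _ = n * W₀ := by simp
  have hhigh : (#{p ∈ s | ¬p.2 < W₀} : ℝ) ≤ n * M := by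
    have hM : 0 ≤ M := (Nat.cast_nonneg _).trans (hfib W₀ le_rfl)
    rw [card_eq_sum_card_fiberwise (f := Prod.snd) (t := Ico W₀ n) fun p hp ↦ by
      obtain ⟨hps, hpW⟩ := mem_filter.1 hp
      simpa using And.intro (not_lt.1 hpW) (hs p hps).2]
    push_cast
    calc ∑ w ∈ Ico W₀ n, (#{p ∈ {p ∈ s | ¬p.2 < W₀} | p.2 = w} : ℝ)
        ≤ ∑ w ∈ Ico W₀ n, M := sum_le_sum fun w hw ↦
          (Nat.cast_le.2 (card_le_card (filter_subset_filter _ (filter_subset _ _)))).trans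
            (hfib w (mem_Ico.1 hw).1)
      _ = (n - W₀ : ℕ) * M := by simp
      _ ≤ n * M := by gcongr; exact Nat.sub_le n W₀
  rw [← card_filter_add_card_filter_not (fun p : ℕ × ℕ ↦ p.2 < W₀)]
  push_cast
  have hlow' : (#{p ∈ s | p.2 < W₀} : ℝ) ≤ n * W₀ := by exact_mod_cast hlow
  linarith

lemma card_le_of_forall_mem_Der {X : Type*} [MeasurableSpace X] {μ : Measure X}
    [IsProbabilityMeasure μ] {T : X ≃ᵐ X} (hT : MeasurePreserving T μ μ) {A B C : Set X}
    (hA : MeasurableSet A) (hB : MeasurableSet B) (hC : MeasurableSet C) {ε : ℝ} (hε : 0 < ε)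
    {W₀ D : ℕ} (hW₀ : ∀ w ≥ W₀, |μ.real (A ∩ (⇑T)^[w] '' C) - μ.real A * μ.real C| < ε / 2)
    (hD : ∀ d ≥ D, |μ.real (B ∩ (⇑T)^[d] '' B) - μ.real B * μ.real B| < (ε / 2) ^ 2 / 2)
    {h w : ℕ} (hw : W₀ ≤ w) {Z : Finset ℕ} (hZ : ∀ z ∈ Z, (z, w) ∈ Der μ T ε A B C h) :
    (#Z : ℝ) ≤ 4 * (2 * D + 1) / (ε / 2) ^ 2 := by
  refine card_le_of_le_abs_measureReal_inter_iterate_image_sub hT hB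
    (hA.inter (T.measurableSet_iterate_image hC w)) (half_pos hε) (fun d hd ↦ ?_) fun z hz ↦ ?_
  · linarith [(abs_lt.1 (hD d hd)).2]
  · obtain ⟨-, hdev⟩ := hZ z hz
    simp only [← measureReal_def, Set.inter_right_comm A] at hdev
    set b := μ.real B
    have hbW : |b * μ.real (A ∩ (⇑T)^[w] '' C) - μ.real A * b * μ.real C| ≤ ε / 2 := by
      rw [show ∀ x y : ℝ, b * x - y * b * μ.real C = b * (x - y * μ.real C) by intros; ring,
        abs_mul, abs_of_nonneg measureReal_nonneg]
      exact (mul_le_of_le_one_left (abs_nonneg _) measureReal_le_one).trans (hW₀ w hw).le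
    linarith [abs_sub_le (μ.real (A ∩ (⇑T)^[w] '' C ∩ (⇑T)^[z] '' B))
      (b * μ.real (A ∩ (⇑T)^[w] '' C)) (μ.real A * b * μ.real C)]

/-- If `T` is mixing then `dev(h) = |Der(ε,A,B,C,h)|/h` is bounded in `h`. -/
theorem dev_bounded_of_mixing
    {X : Type*} [MeasurableSpace X] (μ : Measure X) [IsProbabilityMeasure μ]
    (T : X ≃ᵐ X) (hT : MeasurePreserving T μ μ)
    (hmix : ∀ A B : Set X, MeasurableSet A → MeasurableSet B →
      Tendsto (fun m : ℕ => μ (A ∩ (⇑T)^[m] '' B)) atTop (nhds (μ A * μ B)))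
    (A B C : Set X) (hA : MeasurableSet A) (hB : MeasurableSet B) (hC : MeasurableSet C)
    (ε : ℝ) (hε : 0 < ε) :
    ∃ K : ℝ, ∀ h : ℕ, 1 ≤ h →
      ((Der μ (⇑T) ε A B C h).ncard : ℝ) / h ≤ K := by
  classical
  obtain ⟨W₀, hW₀⟩ := exists_forall_ge_abs_measureReal_sub_mul_lt (hmix A C hA hC) (half_pos hε)
  obtain ⟨D, hD⟩ := exists_forall_ge_abs_measureReal_sub_mul_lt (hmix B B hB hB)
    (by positivity : 0 < (ε / 2) ^ 2 / 2)
  set M : ℝ := 4 * (2 * D + 1) / (ε / 2) ^ 2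
  refine ⟨2 * (W₀ + M), fun h hh ↦ ?_⟩
  set s := {p ∈ range (h + 1) ×ˢ range (h + 1) | p ∈ Der μ T ε A B C h}
  have hDer : Der μ T ε A B C h = s := by
    ext p
    simpa [s, Nat.lt_succ_iff] using fun hp : p ∈ Der μ T ε A B C h ↦ And.intro hp.1.1 hp.1.2.1
  have hrow : ∀ w ≥ W₀, (#{p ∈ s | p.2 = w} : ℝ) ≤ M := fun w hw ↦ by
    rw [← card_image_of_injOn (f := Prod.fst) fun p hp q hq hpq ↦
      Prod.ext hpq (((mem_filter.1 hp).2).trans (mem_filter.1 hq).2.symm)]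
    refine card_le_of_forall_mem_Der (h := h) hT hA hB hC hε hW₀ hD hw fun z hz ↦ ?_
    obtain ⟨p, hp, rfl⟩ := mem_image.1 hz
    obtain ⟨hps, rfl⟩ := mem_filter.1 hp
    exact (mem_filter.1 hps).2
  have hcard := card_le_of_card_fiber_le (n := h + 1)
    (fun p hp ↦ by simpa using (mem_product.1 (mem_filter.1 hp).1)) hrow
  have hh' : (1 : ℝ) ≤ h := by exact_mod_cast hh
  rw [hDer, Set.ncard_coe_finset, div_le_iff₀ (by positivity)]
  push_cast at hcard
  nlinarith [(by positivity : 0 ≤ W₀ + M)]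
end

section
/- If a measure-preserving action admits, for any measure ν on X^{p+2} that is a self-joining of class M(p+1, p+2) (all (p+1)-dimensional marginals equal μ^{p+1}), the associated order-4 measure ν₂(A₁×A₂×A₁'×A₂') := ⟨P(χ_{A₁}⊗χ_{A₂}), P(χ_{A₁'}⊗χ_{A₂'})⟩ with P defined by ⟨P(χ_{A₁}⊗χ_{A₂}), χ_{B₁}⊗...⊗χ_{B_p}⟩ = ν(A₁×A₂×B₁×...×B_p), then: ν₂ = μ⊗⁴ implies ν = μ^{⊗(p+2)}. -/
open MeasureTheory Filter
open scoped InnerProductSpace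

lemma inner_ind_ind {α : Type*} [MeasurableSpace α]
    {μ : Measure α} {s t : Set α} (hs : MeasurableSet s) (ht : MeasurableSet t)
    (hμs : μ s ≠ ⊤) (hμt : μ t ≠ ⊤) :
    ⟪indicatorConstLp 2 hs hμs (1 : ℝ), indicatorConstLp 2 ht hμt (1 : ℝ)⟫_ℝ
      = (μ (s ∩ t)).toReal := by
  rw [L2.inner_indicatorConstLp_one hs hμs,
    setIntegral_indicatorConstLp hs ht hμt (1:ℝ)]
  simp [Set.inter_comm]
  rfl


/-- For a self-joining `ν` of class `M(p+1, p+2)` with associated operator `P` and the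
order-4 measure `ν₂(A₁×A₂×A₁'×A₂') = ⟪P(χ_{A₁}⊗χ_{A₂}), P(χ_{A₁'}⊗χ_{A₂'})⟫`:
if `ν₂ = μ^{⊗4}` then `ν = μ^{⊗(p+2)}`. -/
theorem joining_trivial_of_nu2_trivial
    {X : Type*} [MeasurableSpace X] [StandardBorelSpace X]
    (μ : Measure X) [IsProbabilityMeasure μ]
    (T : X ≃ᵐ X) (hT : MeasurePreserving T μ μ)
    (p : ℕ) (hp : 1 ≤ p)
    (ν : Measure (Fin (p + 2) → X)) [IsProbabilityMeasure ν]
    (hνinv : MeasurePreserving (fun x : Fin (p + 2) → X => fun i => T (x i)) ν ν)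
    -- all (p+1)-dimensional marginals of ν equal μ^{p+1}
    (hmarg : ∀ j : Fin (p + 2),
      ν.map (fun x : Fin (p + 2) → X => fun i : Fin (p + 1) => x (j.succAbove i))
        = Measure.pi fun _ : Fin (p + 1) => μ)
    -- the Markov operator P determined by ν
    (P : Lp ℝ 2 (μ.prod μ) →L[ℝ] Lp ℝ 2 (Measure.pi fun _ : Fin p => μ))
    (hP : ∀ (A₁ A₂ : Set X) (hA₁ : MeasurableSet A₁) (hA₂ : MeasurableSet A₂)
      (Bs : Fin p → Set X) (hBs : ∀ i, MeasurableSet (Bs i)),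
      ⟪P (indicatorConstLp 2 (hA₁.prod hA₂) (measure_ne_top (μ.prod μ) _) (1 : ℝ)),
          indicatorConstLp 2 (MeasurableSet.univ_pi hBs)
            (measure_ne_top (Measure.pi fun _ : Fin p => μ) _) (1 : ℝ)⟫_ℝ
        = (ν {x : Fin (p + 2) → X | x 0 ∈ A₁ ∧ x 1 ∈ A₂ ∧
            ∀ i : Fin p, x ⟨(i : ℕ) + 2, by omega⟩ ∈ Bs i}).toReal)
    -- the order-4 measure ν₂
    (ν₂ : Measure ((X × X) × (X × X))) [IsProbabilityMeasure ν₂]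
    (hν₂ : ∀ (A₁ A₂ A₁' A₂' : Set X) (hA₁ : MeasurableSet A₁) (hA₂ : MeasurableSet A₂)
      (hA₁' : MeasurableSet A₁') (hA₂' : MeasurableSet A₂'),
      (ν₂ ((A₁ ×ˢ A₂) ×ˢ (A₁' ×ˢ A₂'))).toReal
        = ⟪P (indicatorConstLp 2 (hA₁.prod hA₂) (measure_ne_top (μ.prod μ) _) (1 : ℝ)),
            P (indicatorConstLp 2 (hA₁'.prod hA₂') (measure_ne_top (μ.prod μ) _) (1 : ℝ))⟫_ℝ)
    (htriv : ν₂ = (μ.prod μ).prod (μ.prod μ)) :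
    ν = Measure.pi fun _ : Fin (p + 2) => μ := by
    classical
  haveI : NeZero p := ⟨by omega⟩
  set onePi := indicatorConstLp 2 (MeasurableSet.univ_pi (fun _ : Fin p => MeasurableSet.univ))
    (measure_ne_top (Measure.pi fun _ : Fin p => μ) _) (1 : ℝ) with honePi
  have key : ∀ (A₁ A₂ : Set X) (hA₁ : MeasurableSet A₁) (hA₂ : MeasurableSet A₂)
      (Bs : Fin p → Set X) (hBs : ∀ i, MeasurableSet (Bs i)),
      (ν {x : Fin (p + 2) → X | x 0 ∈ A₁ ∧ x 1 ∈ A₂ ∧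
            ∀ i : Fin p, x ⟨(i : ℕ) + 2, by omega⟩ ∈ Bs i}).toReal
        = (μ A₁).toReal * (μ A₂).toReal * (∏ i, μ (Bs i)).toReal := by
    intro A₁ A₂ hA₁ hA₂ Bs hBs
    set c := (μ A₁).toReal * (μ A₂).toReal with hc
    set f := indicatorConstLp (μ := μ.prod μ) 2 (hA₁.prod hA₂)
      (measure_ne_top (μ.prod μ) _) (1 : ℝ) with hf
    -- the (0,1) marginal of ν
    have hν01 : ν {x : Fin (p + 2) → X | x 0 ∈ A₁ ∧ x 1 ∈ A₂} = μ A₁ * μ A₂ := by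
      have hm := hmarg (Fin.last (p + 1))
      have hgm : Measurable (fun x : Fin (p + 2) → X =>
          fun i : Fin (p + 1) => x ((Fin.last (p + 1)).succAbove i)) :=
        measurable_pi_lambda _ fun i => measurable_pi_apply _
      have hSm : MeasurableSet {y : Fin (p + 1) → X | y 0 ∈ A₁ ∧ y 1 ∈ A₂} :=
        ((measurable_pi_apply (0 : Fin (p + 1))) hA₁).inter
          ((measurable_pi_apply (1 : Fin (p + 1))) hA₂)
      have hmap : ν.map (fun x : Fin (p + 2) → X =>
            fun i : Fin (p + 1) => x ((Fin.last (p + 1)).succAbove i))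
            {y : Fin (p + 1) → X | y 0 ∈ A₁ ∧ y 1 ∈ A₂}
          = (Measure.pi fun _ : Fin (p + 1) => μ)
            {y : Fin (p + 1) → X | y 0 ∈ A₁ ∧ y 1 ∈ A₂} := by rw [hm]
      rw [Measure.map_apply hgm hSm] at hmap
      have e0 : (Fin.last (p + 1)).succAbove (0 : Fin (p + 1)) = (0 : Fin (p + 2)) := by
        simp [Fin.succAbove_last]
      have e1 : (Fin.last (p + 1)).succAbove (1 : Fin (p + 1)) = (1 : Fin (p + 2)) := by
        rw [Fin.succAbove_last]
        ext
        simp [Fin.val_one']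
        omega
      have ec1 : Fin.castSucc (1 : Fin (p + 1)) = (1 : Fin (p + 2)) := by
        ext
        simp [Fin.val_one']
        omega
      have hpre : (fun x : Fin (p + 2) → X =>
            fun i : Fin (p + 1) => x ((Fin.last (p + 1)).succAbove i)) ⁻¹'
            {y : Fin (p + 1) → X | y 0 ∈ A₁ ∧ y 1 ∈ A₂}
          = {x : Fin (p + 2) → X | x 0 ∈ A₁ ∧ x 1 ∈ A₂} := by
        ext x
        simp [Set.mem_preimage, e0, e1, ec1]
      rw [hpre] at hmap
      rw [hmap]
      have hSpi : {y : Fin (p + 1) → X | y 0 ∈ A₁ ∧ y 1 ∈ A₂}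
          = Set.pi Set.univ
            (fun i : Fin (p + 1) => if i = 0 then A₁ else if i = 1 then A₂ else Set.univ) := by
        have h10 : (1 : Fin (p + 1)) ≠ 0 := by
          simp [Fin.ext_iff, Fin.val_one']
        ext y
        simp only [Set.mem_setOf_eq, Set.mem_pi, Set.mem_univ, forall_true_left]
        constructor
        · rintro ⟨h0, h1⟩ i
          split_ifs with hi hi'
          · subst hi; exact h0
          · subst hi'; exact h1
          · trivial
        · intro h
          refine ⟨?_, ?_⟩
          · have := h 0; simpa using this
          · have := h 1; simpa [h10] using this
      rw [hSpi, Measure.pi_pi, Fin.prod_univ_succ]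
      have hsucc : ∀ i : Fin p,
          μ ((fun j : Fin (p + 1) => if j = 0 then A₁ else if j = 1 then A₂ else Set.univ) i.succ)
          = if i = 0 then μ A₂ else 1 := by
        intro i
        have h0 : i.succ ≠ 0 := Fin.succ_ne_zero i
        by_cases hi : i = 0
        · subst hi
          simp [Fin.succ_zero_eq_one, h0]
        · have h1 : i.succ ≠ 1 := by
            intro h
            apply hi
            have hv := congrArg Fin.val h
            rw [Fin.val_succ, Fin.val_one', Nat.mod_eq_of_lt (by omega)] at hv
            exact Fin.ext (by simpa using hv)
          simp [h0, h1, hi]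
      simp only [hsucc]
      rw [Finset.prod_ite_eq' Finset.univ (0 : Fin p) (fun _ => μ A₂)]
      simp
    -- step 1 : ⟪P f, onePi⟫ = c
    have h1 : ⟪P f, onePi⟫_ℝ = c := by
      have h := hP A₁ A₂ hA₁ hA₂ (fun _ => Set.univ) (fun _ => MeasurableSet.univ)
      have hsets : {x : Fin (p + 2) → X | x 0 ∈ A₁ ∧ x 1 ∈ A₂ ∧
            ∀ i : Fin p, x ⟨(i : ℕ) + 2, by omega⟩ ∈ (fun _ : Fin p => Set.univ) i}
          = {x : Fin (p + 2) → X | x 0 ∈ A₁ ∧ x 1 ∈ A₂} := by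
        ext x; simp
      rw [hsets, hν01] at h
      rw [honePi, hf]
      rw [h, ENNReal.toReal_mul, hc]
    -- step 2 : ‖P f‖² = c * c
    have h2 : ⟪P f, P f⟫_ℝ = c * c := by
      have h := hν₂ A₁ A₂ A₁ A₂ hA₁ hA₂ hA₁ hA₂
      rw [htriv, Measure.prod_prod, Measure.prod_prod] at h
      simp only [ENNReal.toReal_mul] at h
      rw [hf, ← h, hc]
    -- step 3 : ⟪onePi, onePi⟫ = 1
    have h3 : ⟪onePi, onePi⟫_ℝ = 1 := by
      rw [honePi, inner_ind_ind]
      simp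
    -- P f is constant
    have hPf : P f = c • onePi := by
      have hz : ⟪P f - c • onePi, P f - c • onePi⟫_ℝ = 0 := by
        rw [real_inner_sub_sub_self]
        simp only [real_inner_smul_left, real_inner_smul_right]
        rw [h1, h2, h3]
        ring
      have := inner_self_eq_zero.mp hz
      rwa [sub_eq_zero] at this
    -- conclude
    have hfin := hP A₁ A₂ hA₁ hA₂ Bs hBs
    rw [← hf] at hfin
    rw [hPf, real_inner_smul_left, honePi, inner_ind_ind] at hfin
    rw [← hfin]
    have hint : (Set.pi Set.univ fun _ : Fin p => (Set.univ : Set X)) ∩ Set.pi Set.univ Bs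
        = Set.pi Set.univ Bs := by simp
    rw [hint, Measure.pi_pi, hc]
  -- assemble
  refine (Measure.pi_eq fun s hs => ?_).symm
  have hset : Set.pi Set.univ s = {x : Fin (p + 2) → X | x 0 ∈ s 0 ∧ x 1 ∈ s 1 ∧
      ∀ i : Fin p, x ⟨(i : ℕ) + 2, by omega⟩ ∈ (fun i : Fin p => s ⟨(i : ℕ) + 2, by omega⟩) i} := by
    ext x
    simp only [Set.mem_pi, Set.mem_univ, forall_true_left, Set.mem_setOf_eq]
    constructor
    · intro h; exact ⟨h 0, h 1, fun i => h _⟩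
    · rintro ⟨h0, h1, h2⟩ j
      obtain ⟨jv, hj⟩ := j
      match jv, hj with
      | 0, hj =>
        have : (⟨0, hj⟩ : Fin (p + 2)) = 0 := by ext; simp
        rw [this]; exact h0
      | 1, hj =>
        have : (⟨1, hj⟩ : Fin (p + 2)) = 1 := by ext; simp
        rw [this]; exact h1
      | (k + 2), hj => exact h2 ⟨k, by omega⟩
  have hprod : ∏ j : Fin (p + 2), μ (s j)
      = μ (s 0) * μ (s 1) * ∏ i : Fin p, μ (s ⟨(i : ℕ) + 2, by omega⟩) := by
    rw [Fin.prod_univ_succ, Fin.prod_univ_succ, ← mul_assoc]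
    congr 1
  have hne2 : μ (s 0) * μ (s 1) * ∏ i : Fin p, μ (s ⟨(i : ℕ) + 2, by omega⟩) ≠ ⊤ := by
    refine ENNReal.mul_ne_top (ENNReal.mul_ne_top (measure_ne_top _ _) (measure_ne_top _ _)) ?_
    exact (ENNReal.prod_lt_top fun i _ => (measure_lt_top μ _)).ne
  rw [hprod, hset]
  refine ((ENNReal.toReal_eq_toReal_iff' (measure_ne_top ν _) hne2).mp ?_)
  rw [key (s 0) (s 1) (hs 0) (hs 1) (fun i => s ⟨(i : ℕ) + 2, by omega⟩) (fun i => hs _)]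
  rw [ENNReal.toReal_mul, ENNReal.toReal_mul]
end
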